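/- arXiv:1611.06927 — 11 statements merged into one kernel-verified Lean document; each statement's English description precedes it below -/
import Mathlib

section
/- Let E, L_z, Q be real numbers with Q < 0, and suppose that at some θ ∈ (0, π) the angular function Θ(θ) = Q − (L_z²/sin²θ − E²a²) cos²θ is nonnegative and the coefficient inequality a²E² − Q − L_z² < 0 holds. Then one derives a contradiction; consequently if Θ(θ) ≥ 0 for some θ and Q < 0, then a²E² − Q − L_z² ≥ 0. -/
/-- For a null geodesic with `Q < 0`: if `Θ(θ) ≥ 0` at some `θ ∈ (0, π)` and
`a²E² − Q − L_z² < 0`, a contradiction follows; hence `Θ(θ) ≥ 0` forces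
`a²E² − Q − L_z² ≥ 0`. -/
theorem theta_nonneg_forces_coeff (a M E Lz Q : ℝ) (ha : 0 < a) (hM : 0 < M)
    (hQ : Q < 0) (θ : ℝ) (hθ : θ ∈ Set.Ioo 0 Real.pi)
    (hΘ : 0 ≤ Q - (Lz ^ 2 / Real.sin θ ^ 2 - E ^ 2 * a ^ 2) * Real.cos θ ^ 2) :
    (a ^ 2 * E ^ 2 - Q - Lz ^ 2 < 0 → False) ∧
    0 ≤ a ^ 2 * E ^ 2 - Q - Lz ^ 2 := by
  have hs : 0 < Real.sin θ := Real.sin_pos_of_pos_of_lt_pi hθ.1 hθ.2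
  have hs2 : (0:ℝ) < Real.sin θ ^ 2 := by positivity
  have hpyth : Real.sin θ ^ 2 + Real.cos θ ^ 2 = 1 := Real.sin_sq_add_cos_sq θ
  have key : 0 ≤ Q * Real.sin θ ^ 2 - (Lz ^ 2 - E ^ 2 * a ^ 2 * Real.sin θ ^ 2)
      * Real.cos θ ^ 2 := by
    have := mul_le_mul_of_nonneg_left hΘ (le_of_lt hs2)
    have hne : Real.sin θ ^ 2 ≠ 0 := ne_of_gt hs2
    field_simp at this
    nlinarith [this]
  have h : ¬ (a ^ 2 * E ^ 2 - Q - Lz ^ 2 < 0) := by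
    intro h
    have hc2 : 0 ≤ Real.cos θ ^ 2 := sq_nonneg _
    have h1 : (a ^ 2 * E ^ 2 - Q - Lz ^ 2) * (Real.sin θ ^ 2 * Real.cos θ ^ 2) ≤ 0 :=
      mul_nonpos_of_nonpos_of_nonneg h.le (mul_nonneg hs2.le hc2)
    have h2 : Q * Real.sin θ ^ 2 < 0 := mul_neg_of_neg_of_pos hQ hs2
    have h3 : Q * (Real.sin θ ^ 2 * Real.cos θ ^ 2) ≤ 0 :=
      mul_nonpos_of_nonpos_of_nonneg hQ.le (mul_nonneg hs2.le hc2)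
    have h4 : (0:ℝ) ≤ Lz ^ 2 * Real.cos θ ^ 2 * Real.cos θ ^ 2 := by positivity
    have h5 : Lz ^ 2 * Real.cos θ ^ 2 * (Real.sin θ ^ 2 + Real.cos θ ^ 2)
        = Lz ^ 2 * Real.cos θ ^ 2 := by rw [hpyth]; ring
    nlinarith [key, h1, h2, h3, h4, h5]
  exact ⟨fun hh => h hh, le_of_not_gt h⟩
end

section
/- For Q < 0, the radial polynomial R(r) = E²r⁴ + (a²E² − Q − L_z²)r² + 2MKr − a²Q, where K = Q + (aE − L_z)², is strictly positive for all r in the exterior region r ∈ (r₊, ∞), provided the geodesic exists somewhere (i.e. Θ(θ) ≥ 0 for some θ ∈ (0,π)). In particular null geodesics with Q < 0 have no radial turning points in the exterior region. -/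
/-- Lemma (no radial turning points for `Q < 0`): if a null geodesic with
`Q < 0` exists somewhere (i.e. `Θ(θ) ≥ 0` for some `θ ∈ (0,π)`), then the
radial polynomial `R(r) = E²r⁴ + (a²E² − Q − L_z²)r² + 2MKr − a²Q`, with
`K = Q + (aE − L_z)²`, is strictly positive on the exterior region `r > r₊`. -/
theorem radial_positive_of_Q_neg (M a E Lz Q : ℝ) (hM : 0 < M)
    (ha0 : 0 ≤ a) (haM : a < M) (hQ : Q < 0)
    (hexists : ∃ θ ∈ Set.Ioo (0 : ℝ) Real.pi,
      0 ≤ Q - (Lz ^ 2 / Real.sin θ ^ 2 - E ^ 2 * a ^ 2) * Real.cos θ ^ 2) :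
    ∀ r : ℝ, M + Real.sqrt (M ^ 2 - a ^ 2) < r →
      0 < E ^ 2 * r ^ 4 + (a ^ 2 * E ^ 2 - Q - Lz ^ 2) * r ^ 2 +
        2 * M * (Q + (a * E - Lz) ^ 2) * r - a ^ 2 * Q := by
  obtain ⟨θ, ⟨hθ0, hθπ⟩, hΘ⟩ := hexists
  have hs : 0 < Real.sin θ := Real.sin_pos_of_pos_of_lt_pi hθ0 hθπ
  have hs2 : 0 < Real.sin θ ^ 2 := by positivity
  set s2 := Real.sin θ ^ 2 with hs2def
  set c2 := Real.cos θ ^ 2 with hc2def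
  have hc2 : 0 ≤ c2 := sq_nonneg _
  have hpyth : s2 + c2 = 1 := Real.sin_sq_add_cos_sq θ
  -- clear the denominator in the Θ condition
  have hΘ' : 0 ≤ Q * s2 - (Lz ^ 2 - E ^ 2 * a ^ 2 * s2) * c2 := by
    have h := mul_le_mul_of_nonneg_right hΘ hs2.le
    have hLz : Lz ^ 2 / s2 * s2 = Lz ^ 2 := div_mul_cancel₀ _ hs2.ne'
    nlinarith [h, hLz]
  rw [show c2 = 1 - s2 from by linarith] at hΘ' hc2
  -- K ≥ 0
  have hK : 0 ≤ Q + (a * E - Lz) ^ 2 := by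
    nlinarith [sq_nonneg (Lz - a * E * s2), hΘ', hs2]
  -- Lz² ≤ a²E²
  have hL : Lz ^ 2 ≤ a ^ 2 * E ^ 2 := by
    have hc2pos : 0 < 1 - s2 := by
      rcases hc2.lt_or_eq with h | h
      · exact h
      · have hs21 : s2 = 1 := by linarith
        have h2 : (Lz ^ 2 - E ^ 2 * a ^ 2 * s2) * (1 - s2) = 0 := by rw [hs21]; ring
        have h3 : Q * s2 = Q := by rw [hs21]; ring
        linarith
    nlinarith [hΘ', mul_pos (neg_pos.mpr hQ) hs2, hc2pos,
      mul_nonneg (sq_nonneg (a * E)) (sq_nonneg (1 - s2))]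
  intro r hr
  have hr0 : 0 < r := by
    have : (0:ℝ) ≤ Real.sqrt (M ^ 2 - a ^ 2) := Real.sqrt_nonneg _
    linarith
  nlinarith [sq_nonneg (E * r ^ 2), mul_pos (mul_pos hM (neg_pos.mpr hQ)) hr0,
    mul_nonneg (mul_nonneg (mul_nonneg (by norm_num : (0:ℝ) ≤ 2) hM.le) hK) hr0.le,
    mul_pos (mul_pos hr0 hr0) (show (0:ℝ) < a ^ 2 * E ^ 2 - Q - Lz ^ 2 by linarith),
    mul_nonneg (sq_nonneg a) (neg_pos.mpr hQ).le]
end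

section
/- For Q ≥ 0 (with L_z ≠ 0 and 𝒬 = Q/L_z²), the equation R(r, V, 1, 𝒬) = 0, viewed as a quadratic in V, has for every r > r₊ two real solutions V±(r, 𝒬) = (2Mar ± √(rΔ(r)((1+𝒬)r³ + a²𝒬(r+2M)))) / (r[r(r²+a²) + 2Ma²]), and the discriminant rΔ(r)((1+𝒬)r³ + a²𝒬(r+2M)) is nonnegative for r ≥ r₊. -/
/-- For `𝒬 ≥ 0` the quadratic equation `R(r, V, 1, 𝒬) = 0` in `V` has, for
every `r > r₊`, the two real solutions `V±(r,𝒬)`, and the discriminant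
`rΔ(r)((1+𝒬)r³ + a²𝒬(r+2M))` is nonnegative for `r ≥ r₊`. -/
theorem pseudo_potentials_solve_radial (M a Q : ℝ) (hM : 0 < M)
    (ha0 : 0 ≤ a) (haM : a < M) (hQ : 0 ≤ Q)
    (Δ : ℝ → ℝ) (hΔ : ∀ r, Δ r = r ^ 2 - 2 * M * r + a ^ 2)
    (R : ℝ → ℝ → ℝ)
    (hR : ∀ r ℰ, R r ℰ = ((r ^ 2 + a ^ 2) * ℰ - a) ^ 2 - Δ r * (Q + (a * ℰ - 1) ^ 2))
    (Vp Vm : ℝ → ℝ)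
    (hVp : ∀ r, Vp r = (2 * M * a * r +
      Real.sqrt (r * Δ r * ((1 + Q) * r ^ 3 + a ^ 2 * Q * (r + 2 * M)))) /
      (r * (r * (r ^ 2 + a ^ 2) + 2 * M * a ^ 2)))
    (hVm : ∀ r, Vm r = (2 * M * a * r -
      Real.sqrt (r * Δ r * ((1 + Q) * r ^ 3 + a ^ 2 * Q * (r + 2 * M)))) /
      (r * (r * (r ^ 2 + a ^ 2) + 2 * M * a ^ 2))) :
    (∀ r : ℝ, M + Real.sqrt (M ^ 2 - a ^ 2) ≤ r →
      0 ≤ r * Δ r * ((1 + Q) * r ^ 3 + a ^ 2 * Q * (r + 2 * M))) ∧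
    (∀ r : ℝ, M + Real.sqrt (M ^ 2 - a ^ 2) < r →
      R r (Vp r) = 0 ∧ R r (Vm r) = 0) := by

  have hs0 : (0:ℝ) ≤ M ^ 2 - a ^ 2 := by nlinarith
  have hsq : Real.sqrt (M ^ 2 - a ^ 2) ^ 2 = M ^ 2 - a ^ 2 := Real.sq_sqrt hs0
  have hsnn : 0 ≤ Real.sqrt (M ^ 2 - a ^ 2) := Real.sqrt_nonneg _
  have disc : ∀ r : ℝ, M + Real.sqrt (M ^ 2 - a ^ 2) ≤ r →
      0 ≤ r * Δ r * ((1 + Q) * r ^ 3 + a ^ 2 * Q * (r + 2 * M)) := by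
    intro r hr
    have hr0 : 0 < r := by nlinarith
    have hΔ0 : 0 ≤ Δ r := by rw [hΔ]; nlinarith
    have h3 : 0 ≤ (1 + Q) * r ^ 3 + a ^ 2 * Q * (r + 2 * M) := by positivity
    have := mul_nonneg (mul_nonneg hr0.le hΔ0) h3
    exact this
  refine ⟨disc, fun r hr => ?_⟩
  have hr0 : 0 < r := by nlinarith
  have hΔ0 : 0 < Δ r := by rw [hΔ]; nlinarith
  have hD : 0 ≤ r * Δ r * ((1 + Q) * r ^ 3 + a ^ 2 * Q * (r + 2 * M)) := disc r hr.le
  set s := Real.sqrt (r * Δ r * ((1 + Q) * r ^ 3 + a ^ 2 * Q * (r + 2 * M))) with hsdef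
  have hs2 : s ^ 2 = r * Δ r * ((1 + Q) * r ^ 3 + a ^ 2 * Q * (r + 2 * M)) :=
    Real.sq_sqrt hD
  rw [hΔ] at hs2
  set A := r * (r * (r ^ 2 + a ^ 2) + 2 * M * a ^ 2) with hAdef
  have hA : 0 < A := by positivity
  have hA' : A ≠ 0 := ne_of_gt hA
  have hVp' : A * Vp r = 2 * M * a * r + s := by
    rw [hVp, mul_div_assoc', mul_comm, mul_div_assoc, div_self hA', mul_one]
  have hVm' : A * Vm r = 2 * M * a * r - s := by
    rw [hVm, mul_div_assoc', mul_comm, mul_div_assoc, div_self hA', mul_one]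
  constructor
  · have key : A ^ 2 * R r (Vp r) = 0 := by
      rw [hR, hΔ]
      have expand : A ^ 2 * (((r ^ 2 + a ^ 2) * Vp r - a) ^ 2 -
          (r ^ 2 - 2 * M * r + a ^ 2) * (Q + (a * Vp r - 1) ^ 2)) =
          ((r ^ 2 + a ^ 2) * (A * Vp r) - a * A) ^ 2 -
          (r ^ 2 - 2 * M * r + a ^ 2) * (Q * A ^ 2 + (a * (A * Vp r) - A) ^ 2) := by
        ring
      rw [expand, hVp']
      linear_combination (r * (r * (r ^ 2 + a ^ 2) + 2 * M * a ^ 2)) * hs2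
    have := mul_eq_zero.mp key
    rcases this with h | h
    · exact absurd h (pow_ne_zero 2 hA')
    · exact h
  · have key : A ^ 2 * R r (Vm r) = 0 := by
      rw [hR, hΔ]
      have expand : A ^ 2 * (((r ^ 2 + a ^ 2) * Vm r - a) ^ 2 -
          (r ^ 2 - 2 * M * r + a ^ 2) * (Q + (a * Vm r - 1) ^ 2)) =
          ((r ^ 2 + a ^ 2) * (A * Vm r) - a * A) ^ 2 -
          (r ^ 2 - 2 * M * r + a ^ 2) * (Q * A ^ 2 + (a * (A * Vm r) - A) ^ 2) := by
        ring
      rw [expand, hVm']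
      linear_combination (r * (r * (r ^ 2 + a ^ 2) + 2 * M * a ^ 2)) * hs2
    rcases mul_eq_zero.mp key with h | h
    · exact absurd h (pow_ne_zero 2 hA')
    · exact h
end

section
/- For every r > r₊ and 𝒬 ≥ 0, the local rotation frequency ω(r) = a/(r²+a²) lies strictly between the pseudo potentials: V₋(r,𝒬) < ω(r) < V₊(r,𝒬) when a > 0 and 𝒬 ≥ 0 (with equality only in the limits r → r₊ and r → ∞); equivalently R(r, ω(r), 1, 𝒬) ≤ 0 with equality only at those limits. -/
/-!
Multiplying the radial function `R(r, ℰ) = ((r²+a²)ℰ - a)² - Δ (𝒬 + (aℰ - 1)²)` by the leading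
coefficient `D = r (r(r²+a²) + 2Ma²)` completes the square: `D R = (D ℰ - 2Mar)² - S` with `S` the
radicand of the potentials, whose roots in `ℰ` are therefore `V± = (2Mar ± √S) / D`. At `ℰ = ω` the
first square of `R` vanishes, so `R(r, ω) = -Δ (𝒬 + r⁴/(r²+a²)²) < 0` outside the horizon, and then
`(D ω - 2Mar)² < S` puts `ω` strictly between the two roots.
-/

open Real

def kerrDelta (M a r : ℝ) : ℝ := r ^ 2 - 2 * M * r + a ^ 2

/-- `R(r, ℰ, 1, 𝒬)`. -/
def radialPotential (M a Q r E : ℝ) : ℝ :=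
  ((r ^ 2 + a ^ 2) * E - a) ^ 2 - kerrDelta M a r * (Q + (a * E - 1) ^ 2)

theorem kerrDelta_pos {M a r : ℝ} (hr : M + √(M ^ 2 - a ^ 2) < r) : 0 < kerrDelta M a r := by
  have hs : M ^ 2 - a ^ 2 ≤ √(M ^ 2 - a ^ 2) ^ 2 := sq_sqrt' ▸ le_max_left _ _
  have hfactor : 0 < (r - M - √(M ^ 2 - a ^ 2)) * (r - M + √(M ^ 2 - a ^ 2)) :=
    mul_pos (by linarith) (by linarith [sqrt_nonneg (M ^ 2 - a ^ 2)])
  unfold kerrDelta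
  nlinarith

theorem radialPotential_omega (M a Q : ℝ) {r : ℝ} (hr : r ≠ 0) :
    radialPotential M a Q r (a / (r ^ 2 + a ^ 2)) =
      -(kerrDelta M a r * (Q + (r ^ 2 / (r ^ 2 + a ^ 2)) ^ 2)) := by
  have : r ^ 2 + a ^ 2 ≠ 0 := by positivity
  unfold radialPotential
  field_simp
  ring

theorem radialPotential_omega_neg {M a Q r : ℝ} (hQ : 0 ≤ Q) (hr : r ≠ 0)
    (hΔ : 0 < kerrDelta M a r) : radialPotential M a Q r (a / (r ^ 2 + a ^ 2)) < 0 := by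
  rw [radialPotential_omega M a Q hr, neg_lt_zero]
  have : 0 < r ^ 2 / (r ^ 2 + a ^ 2) := by positivity
  positivity

theorem mul_radialPotential_eq (M a Q r E : ℝ) :
    r * (r * (r ^ 2 + a ^ 2) + 2 * M * a ^ 2) * radialPotential M a Q r E =
      (r * (r * (r ^ 2 + a ^ 2) + 2 * M * a ^ 2) * E - 2 * M * a * r) ^ 2 -
        r * kerrDelta M a r * ((1 + Q) * r ^ 3 + a ^ 2 * Q * (r + 2 * M)) := by
  unfold radialPotential kerrDelta
  ring

theorem between_roots_of_sq_lt {B D S E : ℝ} (hD : 0 < D) (h : (D * E - B) ^ 2 < S) :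
    (B - √S) / D < E ∧ E < (B + √S) / D := by
  have hlow := neg_sqrt_lt_of_sq_lt h
  have hhigh := lt_sqrt_of_sq_lt h
  constructor
  · rw [div_lt_iff₀ hD]; linarith
  · rw [lt_div_iff₀ hD]; linarith

theorem between_potentials_of_radialPotential_neg {M a Q r E : ℝ} (hM : 0 ≤ M) (hr : 0 < r)
    (hE : radialPotential M a Q r E < 0) :
    let S := r * kerrDelta M a r * ((1 + Q) * r ^ 3 + a ^ 2 * Q * (r + 2 * M))
    let D := r * (r * (r ^ 2 + a ^ 2) + 2 * M * a ^ 2)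
    (2 * M * a * r - √S) / D < E ∧ E < (2 * M * a * r + √S) / D := by
  intro S D
  have hD : 0 < D := by positivity
  refine between_roots_of_sq_lt hD ?_
  have := mul_radialPotential_eq M a Q r E
  nlinarith [mul_neg_of_pos_of_neg hD hE]

theorem omega_between_potentials_general (M a Q : ℝ) (hM : 0 < M)
    (hQ : 0 ≤ Q)
    (Δ : ℝ → ℝ) (hΔ : ∀ r, Δ r = r ^ 2 - 2 * M * r + a ^ 2)
    (Vp Vm : ℝ → ℝ)
    (hVp : ∀ r, Vp r = (2 * M * a * r +
      Real.sqrt (r * Δ r * ((1 + Q) * r ^ 3 + a ^ 2 * Q * (r + 2 * M)))) /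
      (r * (r * (r ^ 2 + a ^ 2) + 2 * M * a ^ 2)))
    (hVm : ∀ r, Vm r = (2 * M * a * r -
      Real.sqrt (r * Δ r * ((1 + Q) * r ^ 3 + a ^ 2 * Q * (r + 2 * M)))) /
      (r * (r * (r ^ 2 + a ^ 2) + 2 * M * a ^ 2))) :
    ∀ r : ℝ, M + Real.sqrt (M ^ 2 - a ^ 2) < r →
      Vm r < a / (r ^ 2 + a ^ 2) ∧ a / (r ^ 2 + a ^ 2) < Vp r ∧
      ((r ^ 2 + a ^ 2) * (a / (r ^ 2 + a ^ 2)) - a) ^ 2 -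
        Δ r * (Q + (a * (a / (r ^ 2 + a ^ 2)) - 1) ^ 2) < 0 := by
  obtain rfl : Δ = kerrDelta M a := funext hΔ
  intro r hr
  have hr0 : 0 < r := by linarith [sqrt_nonneg (M ^ 2 - a ^ 2)]
  have hR := radialPotential_omega_neg hQ hr0.ne' (kerrDelta_pos hr)
  obtain ⟨hlow, hhigh⟩ := between_potentials_of_radialPotential_neg hM.le hr0 hR
  rw [hVp, hVm]
  exact ⟨hlow, hhigh, hR⟩

/-- For `a > 0`, `𝒬 ≥ 0` and every `r > r₊`, the local rotation frequency
`ω(r) = a/(r²+a²)` lies strictly between the pseudo potentials,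
`V₋(r,𝒬) < ω(r) < V₊(r,𝒬)`; equivalently `R(r, ω(r), 1, 𝒬) < 0`. -/
theorem omega_between_potentials (M a Q : ℝ) (hM : 0 < M)
    (ha : 0 < a) (haM : a < M) (hQ : 0 ≤ Q)
    (Δ : ℝ → ℝ) (hΔ : ∀ r, Δ r = r ^ 2 - 2 * M * r + a ^ 2)
    (Vp Vm : ℝ → ℝ)
    (hVp : ∀ r, Vp r = (2 * M * a * r +
      Real.sqrt (r * Δ r * ((1 + Q) * r ^ 3 + a ^ 2 * Q * (r + 2 * M)))) /
      (r * (r * (r ^ 2 + a ^ 2) + 2 * M * a ^ 2)))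
    (hVm : ∀ r, Vm r = (2 * M * a * r -
      Real.sqrt (r * Δ r * ((1 + Q) * r ^ 3 + a ^ 2 * Q * (r + 2 * M)))) /
      (r * (r * (r ^ 2 + a ^ 2) + 2 * M * a ^ 2))) :
    ∀ r : ℝ, M + Real.sqrt (M ^ 2 - a ^ 2) < r →
      Vm r < a / (r ^ 2 + a ^ 2) ∧ a / (r ^ 2 + a ^ 2) < Vp r ∧
      ((r ^ 2 + a ^ 2) * (a / (r ^ 2 + a ^ 2)) - a) ^ 2 -
        Δ r * (Q + (a * (a / (r ^ 2 + a ^ 2)) - 1) ^ 2) < 0 :=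
  omega_between_potentials_general M a Q hM hQ Δ hΔ Vp Vm hVp hVm
end

section
/- For fixed 𝒬 ≥ 0, the pseudo potential V₊(r, 𝒬) has exactly one critical point in r on the interval (r₊, ∞), which is a maximum, and V₋(r, 𝒬) has exactly one critical point, which is a minimum. Consequently, for each 𝒬 ≥ 0 there exist exactly two spherical null orbits. -/
/-!
Both potentials are the roots `E` of `N(r) E² - 4Mar E + a² - (1 + 𝒬) Δ(r) = 0`, where
`N(r) = r (r (r² + a²) + 2Ma²)`. Read as a polynomial in `r`, the left side is the quartic
`R(r, E)`, so `N(r) (E - V₊(r)) (E - V₋(r)) = R(r, E)`.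

At a critical point `x` of `V±`, put `E = V±(x)`. Differentiating the factorisation shows that `x`
is a double root of `R(·, E)`. The remaining quadratic factor is nonpositive at `0`, because
`R(0, E) = -𝒬a²`, and nonnegative at `r₊`, because `R(r₊, E)` is a square. Hence it is positive on
`(r₊, ∞)`, and `R(·, E) > 0` there except at `x`. So neither potential meets the level `E` away
from `x`, and connectedness of `(r₊, ∞)` gives `V₊ ≤ E` (resp. `V₋ ≥ E`) everywhere.

For existence, both potentials equal `a / (r₊² + a²)` at `r₊` and tend to `0` at infinity. `V₊`
rises above the horizon value because `∂ᵣR` is negative there, and `V₋` is negative at `r = 3M`.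
-/

open Filter Topology Set

theorem mul_sub_div_mul_sub_div {n m c u : ℝ} (hn : n ≠ 0) (hu : u ^ 2 = m ^ 2 - n * c) (E : ℝ) :
    n * ((E - (m + u) / n) * (E - (m - u) / n)) = n * E ^ 2 - 2 * m * E + c := by
  field_simp
  linear_combination -hu

theorem exists_gt_lt_of_hasDerivAt_neg {f : ℝ → ℝ} {f' x : ℝ} (hf : HasDerivAt f f' x)
    (hf' : f' < 0) : ∃ z > x, f z < f x := by
  obtain ⟨z, hslope, hz⟩ :=
    ((hf.hasDerivWithinAt (s := Ioi x)).limsup_slope_le' (lt_irrefl x) hf').and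
      self_mem_nhdsWithin |>.exists
  refine ⟨z, hz, ?_⟩
  rw [slope_def_field, div_lt_iff₀ (sub_pos.2 hz), zero_mul] at hslope
  linarith

theorem exists_isLocalMax_of_tendsto_atTop {f : ℝ → ℝ} {a b L : ℝ} (hab : a < b)
    (hf : ContinuousOn f (Ici a)) (hlim : Tendsto f atTop (𝓝 L)) (ha : f a < f b) (hL : L < f b) :
    ∃ c > a, IsLocalMax f c := by
  obtain ⟨R, hR, hbR⟩ := ((hlim.eventually (gt_mem_nhds hL)).and (eventually_gt_atTop b)).exists
  obtain ⟨c, hc, hmax⟩ := isCompact_Icc.exists_isMaxOn (nonempty_Icc.2 (hab.trans hbR).le)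
    (hf.mono Icc_subset_Ici_self)
  have hbc : f b ≤ f c := hmax ⟨hab.le, hbR.le⟩
  have hac : a < c := hc.1.lt_of_ne (by rintro rfl; linarith)
  have hcR : c < R := hc.2.lt_of_ne (by rintro rfl; linarith)
  exact ⟨c, hac, hmax.isLocalMax (Icc_mem_nhds hac hcR)⟩

theorem exists_isLocalMin_of_tendsto_atTop {f : ℝ → ℝ} {a b L : ℝ} (hab : a < b)
    (hf : ContinuousOn f (Ici a)) (hlim : Tendsto f atTop (𝓝 L)) (ha : f b < f a) (hL : f b < L) :
    ∃ c > a, IsLocalMin f c := by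
  obtain ⟨c, hac, hmax⟩ :=
    exists_isLocalMax_of_tendsto_atTop hab hf.neg hlim.neg (neg_lt_neg ha) (neg_lt_neg hL)
  exact ⟨c, hac, by simpa using hmax.neg⟩

section Preconnected

variable {X : Type*} [TopologicalSpace X] {s : Set X} {f g : X → ℝ} {c : ℝ} {x : X}

/- Where `f > c`, the sign condition forces `g ≥ c`, so `f + g - 2c` changes sign between `x` and
such a point; at a zero of it the sign condition reads `-(c - g)² ≥ 0`, forcing `f = g`. -/
theorem IsPreconnected.forall_le_of_sub_mul_sub_nonneg (hs : IsPreconnected s)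
    (hf : ContinuousOn f s) (hg : ContinuousOn g s) (hgf : ∀ z ∈ s, g z < f z)
    (hc : ∀ z ∈ s, 0 ≤ (c - f z) * (c - g z)) (hx : x ∈ s) (hfx : f x ≤ c) :
    ∀ z ∈ s, f z ≤ c := by
  intro z hz
  by_contra! hcz
  have hgz : c ≤ g z := by nlinarith [hc z hz]
  obtain ⟨y, hy, hsum⟩ := hs.intermediate_value₂ (f := fun z => f z + g z) (g := fun _ => 2 * c)
    hx hz (hf.add hg) continuousOn_const (by linarith [hgf x hx]) (by linarith)
  have hgfy := sub_pos.2 (hgf y hy)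
  nlinarith [hc y hy, mul_pos hgfy hgfy]

theorem IsPreconnected.forall_ge_of_sub_mul_sub_nonneg (hs : IsPreconnected s)
    (hf : ContinuousOn f s) (hg : ContinuousOn g s) (hgf : ∀ z ∈ s, g z < f z)
    (hc : ∀ z ∈ s, 0 ≤ (c - f z) * (c - g z)) (hx : x ∈ s) (hgx : c ≤ g x) :
    ∀ z ∈ s, c ≤ g z := by
  intro z hz
  have := hs.forall_le_of_sub_mul_sub_nonneg (f := fun z => -g z) (g := fun z => -f z) hg.neg
    hf.neg (fun z hz => neg_lt_neg (hgf z hz)) (c := -c) (fun z hz => by linarith [hc z hz]) hx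
    (neg_le_neg hgx) z hz
  linarith

end Preconnected

section Kerr

variable {M a Q E rp r x y z σ : ℝ}

structure IsOuterHorizon (M a rp : ℝ) : Prop where
  delta_eq_zero : rp ^ 2 - 2 * M * rp + a ^ 2 = 0
  lt : M < rp

theorem IsOuterHorizon.pos (hrp : IsOuterHorizon M a rp) (hM : 0 ≤ M) : 0 < rp :=
  hM.trans_lt hrp.lt

theorem IsOuterHorizon.delta_pos (hrp : IsOuterHorizon M a rp) (hr : rp < r) :
    0 < r ^ 2 - 2 * M * r + a ^ 2 := by
  have : r ^ 2 - 2 * M * r + a ^ 2 = (r - rp) * (r + rp - 2 * M) := by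
    linear_combination hrp.delta_eq_zero
  rw [this]
  exact mul_pos (by linarith) (by linarith [hrp.lt])

/-- The quartic `R(r, E, 1, 𝒬)`. -/
def radialQuartic (M a Q E r : ℝ) : ℝ :=
  E ^ 2 * r ^ 4 + (E ^ 2 * a ^ 2 - (1 + Q)) * r ^ 2 + 2 * M * (a ^ 2 * E ^ 2 - 2 * a * E + 1 + Q) * r
    - Q * a ^ 2

def radialQuarticDeriv (M a Q E r : ℝ) : ℝ :=
  4 * E ^ 2 * r ^ 3 + 2 * (E ^ 2 * a ^ 2 - (1 + Q)) * r + 2 * M * (a ^ 2 * E ^ 2 - 2 * a * E + 1 + Q)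

theorem hasDerivAt_radialQuartic (M a Q E r : ℝ) :
    HasDerivAt (radialQuartic M a Q E) (radialQuarticDeriv M a Q E r) r := by
  have h := ((((hasDerivAt_pow 4 r).const_mul (E ^ 2)).add
    ((hasDerivAt_pow 2 r).const_mul (E ^ 2 * a ^ 2 - (1 + Q)))).add
    ((hasDerivAt_id' r).const_mul (2 * M * (a ^ 2 * E ^ 2 - 2 * a * E + 1 + Q)))).sub_const (Q * a ^ 2)
  exact h.congr_deriv (by simp only [radialQuarticDeriv]; push_cast; ring)

theorem radialQuartic_eq_sq_of_delta_eq_zero (hrp : rp ^ 2 - 2 * M * rp + a ^ 2 = 0) (E : ℝ) :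
    radialQuartic M a Q E rp = (E * (rp ^ 2 + a ^ 2) - a) ^ 2 := by
  unfold radialQuartic
  linear_combination (-(a ^ 2 * E ^ 2) + 2 * a * E - (1 + Q)) * hrp

theorem radialQuarticDeriv_neg_of_lt (hQ : 0 ≤ Q) (hrp0 : 0 < rp) (hMrp : M < rp) :
    radialQuarticDeriv M a Q (a / (rp ^ 2 + a ^ 2)) rp < 0 := by
  have key : radialQuarticDeriv M a Q (a / (rp ^ 2 + a ^ 2)) rp * ((rp ^ 2 + a ^ 2) ^ 2 * rp)
      = 2 * rp * (rp - M) * (a ^ 2 * (2 * rp ^ 2 + a ^ 2) - (1 + Q) * (rp ^ 2 + a ^ 2) ^ 2) := by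
    unfold radialQuarticDeriv
    field_simp
    ring
  have hneg : a ^ 2 * (2 * rp ^ 2 + a ^ 2) - (1 + Q) * (rp ^ 2 + a ^ 2) ^ 2 < 0 := by
    nlinarith [pow_pos hrp0 4, mul_nonneg hQ (sq_nonneg (rp ^ 2 + a ^ 2))]
  have : radialQuarticDeriv M a Q (a / (rp ^ 2 + a ^ 2)) rp * ((rp ^ 2 + a ^ 2) ^ 2 * rp) < 0 := by
    rw [key]
    exact mul_neg_of_pos_of_neg (by nlinarith) hneg
  exact neg_of_mul_neg_left this (by positivity)

theorem radialQuartic_pos_of_double_root (hQ : 0 ≤ Q) (hrp0 : 0 < rp)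
    (hrp : rp ^ 2 - 2 * M * rp + a ^ 2 = 0) (hx : rp < x)
    (hPx : radialQuartic M a Q E x = 0) (hP'x : radialQuarticDeriv M a Q E x = 0)
    (hz : rp < z) (hzx : z ≠ x) : 0 < radialQuartic M a Q E z := by
  set c := E ^ 2 * a ^ 2 - (1 + Q) + 3 * x ^ 2 * E ^ 2
  have hfactor : ∀ r, radialQuartic M a Q E r
      = (r - x) ^ 2 * (E ^ 2 * r ^ 2 + 2 * x * E ^ 2 * r + c) := by
    intro r
    unfold radialQuartic radialQuarticDeriv at *
    linear_combination hPx + (r - x) * hP'x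
  have hx0 : 0 < x := hrp0.trans hx
  have hc : c ≤ 0 := by
    have h0 := hfactor 0
    simp only [radialQuartic] at h0
    nlinarith [mul_nonneg hQ (sq_nonneg a), mul_pos hx0 hx0]
  have hq_rp : 0 ≤ E ^ 2 * rp ^ 2 + 2 * x * E ^ 2 * rp + c := by
    have h := hfactor rp
    rw [radialQuartic_eq_sq_of_delta_eq_zero hrp] at h
    have : 0 < (rp - x) ^ 2 := by nlinarith
    nlinarith [sq_nonneg (E * (rp ^ 2 + a ^ 2) - a)]
  have hslope : 0 < E ^ 2 * rp * z - c := by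
    rcases hc.lt_or_eq with hc | hc
    · nlinarith [mul_nonneg (mul_nonneg (sq_nonneg E) hrp0.le) (hrp0.trans hz).le]
    · have hE : 0 < E ^ 2 := by nlinarith [sq_nonneg a, sq_nonneg x]
      rw [hc, sub_zero]
      exact mul_pos (mul_pos hE hrp0) (hrp0.trans hz)
  have hq_z : 0 < E ^ 2 * z ^ 2 + 2 * x * E ^ 2 * z + c := by
    have key : rp * (E ^ 2 * z ^ 2 + 2 * x * E ^ 2 * z + c)
        = z * (E ^ 2 * rp ^ 2 + 2 * x * E ^ 2 * rp + c) + (z - rp) * (E ^ 2 * rp * z - c) := by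
      ring
    have : 0 < rp * (E ^ 2 * z ^ 2 + 2 * x * E ^ 2 * z + c) := by
      rw [key]
      nlinarith [mul_pos (sub_pos.2 hz) hslope, mul_nonneg (hrp0.trans hz).le hq_rp]
    exact pos_of_mul_pos_right this hrp0.le
  rw [hfactor]
  exact mul_pos (sq_pos_of_ne_zero (sub_ne_zero.2 hzx)) hq_z

def potentialDenom (M a r : ℝ) : ℝ := r * (r * (r ^ 2 + a ^ 2) + 2 * M * a ^ 2)

def potentialDiscr (M a Q r : ℝ) : ℝ :=
  r * (r ^ 2 - 2 * M * r + a ^ 2) * ((1 + Q) * r ^ 3 + a ^ 2 * Q * (r + 2 * M))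

/-- `potential M a Q 1` is `V₊` and `potential M a Q (-1)` is `V₋`. -/
noncomputable def potential (M a Q σ r : ℝ) : ℝ :=
  (2 * M * a * r + σ * √(potentialDiscr M a Q r)) / potentialDenom M a r

theorem potentialDenom_pos (hM : 0 ≤ M) (hr : 0 < r) : 0 < potentialDenom M a r := by
  unfold potentialDenom
  positivity

theorem potentialDiscr_pos (hM : 0 ≤ M) (hQ : 0 ≤ Q) (hrp : IsOuterHorizon M a rp) (hr : rp < r) :
    0 < potentialDiscr M a Q r := by
  have hr0 : 0 < r := (hrp.pos hM).trans hr
  have hΔ := hrp.delta_pos hr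
  unfold potentialDiscr
  positivity

theorem potentialDenom_mul_sub_mul_sub (hM : 0 ≤ M) (hQ : 0 ≤ Q) (hrp : IsOuterHorizon M a rp)
    (hr : rp < r) (hσ : σ ^ 2 = 1) (E : ℝ) :
    potentialDenom M a r * ((E - potential M a Q σ r) * (E - potential M a Q (-σ) r))
      = radialQuartic M a Q E r := by
  have hu : (σ * √(potentialDiscr M a Q r)) ^ 2 = (2 * M * a * r) ^ 2
      - potentialDenom M a r * (a ^ 2 - (1 + Q) * (r ^ 2 - 2 * M * r + a ^ 2)) := by
    rw [mul_pow, hσ, Real.sq_sqrt (potentialDiscr_pos hM hQ hrp hr).le, potentialDiscr,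
      potentialDenom]
    ring
  rw [potential, potential, neg_mul, ← sub_eq_add_neg,
    mul_sub_div_mul_sub_div (potentialDenom_pos hM ((hrp.pos hM).trans hr)).ne' hu,
    potentialDenom, radialQuartic]
  ring

theorem radialQuartic_potential_eq_zero (hM : 0 ≤ M) (hQ : 0 ≤ Q) (hrp : IsOuterHorizon M a rp)
    (hr : rp < r) (hσ : σ ^ 2 = 1) : radialQuartic M a Q (potential M a Q σ r) r = 0 := by
  rw [← potentialDenom_mul_sub_mul_sub hM hQ hrp hr hσ, sub_self, zero_mul, mul_zero]

theorem potential_neg_one_lt_potential_one (hM : 0 ≤ M) (hQ : 0 ≤ Q)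
    (hrp : IsOuterHorizon M a rp) (hr : rp < r) : potential M a Q (-1) r < potential M a Q 1 r := by
  have := Real.sqrt_pos.2 (potentialDiscr_pos hM hQ hrp hr)
  unfold potential
  gcongr ?_ / _
  · exact potentialDenom_pos hM ((hrp.pos hM).trans hr)
  · linarith

theorem potential_one_pos (hM : 0 ≤ M) (ha : 0 ≤ a) (hQ : 0 ≤ Q) (hrp : IsOuterHorizon M a rp)
    (hr : rp < r) : 0 < potential M a Q 1 r := by
  have := Real.sqrt_pos.2 (potentialDiscr_pos hM hQ hrp hr)
  have hr0 : 0 < r := (hrp.pos hM).trans hr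
  unfold potential
  exact div_pos (by positivity) (potentialDenom_pos hM hr0)

theorem IsOuterHorizon.potential_eq (hrp : IsOuterHorizon M a rp) (hM : 0 ≤ M) (Q σ : ℝ) :
    potential M a Q σ rp = a / (rp ^ 2 + a ^ 2) := by
  have hN : potentialDenom M a rp = (rp ^ 2 + a ^ 2) ^ 2 := by
    unfold potentialDenom
    linear_combination -a ^ 2 * hrp.delta_eq_zero
  have hs : 0 < rp ^ 2 + a ^ 2 := by have := hrp.pos hM; positivity
  rw [potential, potentialDiscr, hrp.delta_eq_zero, mul_zero, zero_mul, Real.sqrt_zero, mul_zero,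
    add_zero, hN]
  field_simp
  linear_combination -a * hrp.delta_eq_zero

theorem continuousOn_potential (hM : 0 ≤ M) (hrp0 : 0 < rp) (Q σ : ℝ) :
    ContinuousOn (potential M a Q σ) (Ici rp) := by
  unfold potential potentialDiscr potentialDenom
  refine ContinuousOn.div (by fun_prop) (by fun_prop) fun r hr => ?_
  exact (potentialDenom_pos hM (hrp0.trans_le hr)).ne'

theorem differentiableAt_potential (hM : 0 ≤ M) (hQ : 0 ≤ Q) (hrp : IsOuterHorizon M a rp)
    (hr : rp < r) (σ : ℝ) : DifferentiableAt ℝ (potential M a Q σ) r := by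
  have hS := potentialDiscr_pos hM hQ hrp hr
  have hN := potentialDenom_pos (a := a) hM ((hrp.pos hM).trans hr)
  unfold potential
  exact ((by fun_prop : DifferentiableAt ℝ (fun r => 2 * M * a * r) r).add
    ((differentiableAt_const σ).mul ((show DifferentiableAt ℝ (potentialDiscr M a Q) r by
      unfold potentialDiscr; fun_prop).sqrt hS.ne'))).div
    (by unfold potentialDenom; fun_prop) hN.ne'

theorem tendsto_potential_atTop (M a Q σ : ℝ) : Tendsto (potential M a Q σ) atTop (𝓝 0) := by
  set G : ℝ → ℝ := fun t => (2 * M * a * t ^ 3 + σ * t * √((1 - 2 * M * t + a ^ 2 * t ^ 2)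
      * (1 + Q + a ^ 2 * Q * t ^ 2 + 2 * M * a ^ 2 * Q * t ^ 3)))
      / (1 + a ^ 2 * t ^ 2 + 2 * M * a ^ 2 * t ^ 3)
  have hG : ContinuousAt G 0 := ContinuousAt.div (by fun_prop) (by fun_prop) (by norm_num)
  have hG0 : G 0 = 0 := by simp [G]
  have hV : ∀ r, 0 < r → potential M a Q σ r = G r⁻¹ := by
    intro r hr
    have hS : potentialDiscr M a Q r = (r ^ 3) ^ 2 * ((1 - 2 * M * r⁻¹ + a ^ 2 * r⁻¹ ^ 2)
        * (1 + Q + a ^ 2 * Q * r⁻¹ ^ 2 + 2 * M * a ^ 2 * Q * r⁻¹ ^ 3)) := by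
      unfold potentialDiscr
      field_simp
      ring
    rw [potential, hS, Real.sqrt_mul (sq_nonneg _), Real.sqrt_sq (by positivity), potentialDenom]
    simp only [G]
    field_simp
  rw [← hG0]
  refine (hG.tendsto.comp tendsto_inv_atTop_zero).congr' ?_
  filter_upwards [eventually_gt_atTop 0] with r hr using (hV r hr).symm

theorem radialQuarticDeriv_potential_eq_zero (hM : 0 ≤ M) (hQ : 0 ≤ Q)
    (hrp : IsOuterHorizon M a rp) (hσ : σ ^ 2 = 1) (hx : rp < x)
    (hdx : deriv (potential M a Q σ) x = 0) :
    radialQuarticDeriv M a Q (potential M a Q σ x) x = 0 := by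
  set E := potential M a Q σ x
  have hV : HasDerivAt (potential M a Q σ) 0 x :=
    hdx ▸ (differentiableAt_potential hM hQ hrp hx σ).hasDerivAt
  have hW := (differentiableAt_potential hM hQ hrp hx (-σ)).hasDerivAt
  have hN : DifferentiableAt ℝ (potentialDenom M a) x := by unfold potentialDenom; fun_prop
  have hprod := hN.hasDerivAt.mul ((hV.const_sub E).mul (hW.const_sub E))
  have hfactor : radialQuartic M a Q E =ᶠ[𝓝 x] fun r =>
      potentialDenom M a r * ((E - potential M a Q σ r) * (E - potential M a Q (-σ) r)) := by
    filter_upwards [Ioi_mem_nhds hx] with r hr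
    exact (potentialDenom_mul_sub_mul_sub hM hQ hrp hr hσ E).symm
  refine (hasDerivAt_radialQuartic M a Q E x).unique
    ((hprod.congr_of_eventuallyEq hfactor).congr_deriv ?_)
  simp [E]

theorem radialQuartic_potential_pos (hM : 0 ≤ M) (hQ : 0 ≤ Q) (hrp : IsOuterHorizon M a rp)
    (hσ : σ ^ 2 = 1) (hx : rp < x) (hdx : deriv (potential M a Q σ) x = 0) (hz : rp < z)
    (hzx : z ≠ x) : 0 < radialQuartic M a Q (potential M a Q σ x) z :=
  radialQuartic_pos_of_double_root hQ (hrp.pos hM) hrp.delta_eq_zero hx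
    (radialQuartic_potential_eq_zero hM hQ hrp hx hσ)
    (radialQuarticDeriv_potential_eq_zero hM hQ hrp hσ hx hdx) hz hzx

theorem potential_sub_mul_sub_nonneg (hM : 0 ≤ M) (hQ : 0 ≤ Q) (hrp : IsOuterHorizon M a rp)
    (hσ : σ ^ 2 = 1) (hx : rp < x) (hdx : deriv (potential M a Q σ) x = 0) (hz : rp < z) :
    0 ≤ (potential M a Q σ x - potential M a Q σ z)
      * (potential M a Q σ x - potential M a Q (-σ) z) := by
  have hP : 0 ≤ radialQuartic M a Q (potential M a Q σ x) z := by
    rcases eq_or_ne z x with rfl | hzx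
    · exact (radialQuartic_potential_eq_zero hM hQ hrp hz hσ).ge
    · exact (radialQuartic_potential_pos hM hQ hrp hσ hx hdx hz hzx).le
  rw [← potentialDenom_mul_sub_mul_sub hM hQ hrp hz hσ] at hP
  exact nonneg_of_mul_nonneg_right hP (potentialDenom_pos hM ((hrp.pos hM).trans hz))

theorem isMaxOn_potential_one (hM : 0 ≤ M) (hQ : 0 ≤ Q) (hrp : IsOuterHorizon M a rp)
    (hx : rp < x) (hdx : deriv (potential M a Q 1) x = 0) :
    IsMaxOn (potential M a Q 1) (Ioi rp) x :=
  isPreconnected_Ioi.forall_le_of_sub_mul_sub_nonneg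
    ((continuousOn_potential hM (hrp.pos hM) Q 1).mono Ioi_subset_Ici_self)
    ((continuousOn_potential hM (hrp.pos hM) Q (-1)).mono Ioi_subset_Ici_self)
    (fun _ hz => potential_neg_one_lt_potential_one hM hQ hrp hz)
    (fun _ hz => potential_sub_mul_sub_nonneg hM hQ hrp (one_pow 2) hx hdx hz) hx le_rfl

theorem isMinOn_potential_neg_one (hM : 0 ≤ M) (hQ : 0 ≤ Q) (hrp : IsOuterHorizon M a rp)
    (hx : rp < x) (hdx : deriv (potential M a Q (-1)) x = 0) :
    IsMinOn (potential M a Q (-1)) (Ioi rp) x :=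
  isPreconnected_Ioi.forall_ge_of_sub_mul_sub_nonneg
    ((continuousOn_potential hM (hrp.pos hM) Q 1).mono Ioi_subset_Ici_self)
    ((continuousOn_potential hM (hrp.pos hM) Q (-1)).mono Ioi_subset_Ici_self)
    (fun _ hz => potential_neg_one_lt_potential_one hM hQ hrp hz)
    (fun _ hz => by
      have := potential_sub_mul_sub_nonneg hM hQ hrp (by norm_num) hx hdx hz
      rw [neg_neg] at this
      linarith) hx le_rfl

theorem eq_of_deriv_potential_eq_zero (hM : 0 ≤ M) (hQ : 0 ≤ Q) (hrp : IsOuterHorizon M a rp)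
    (hσ : σ ^ 2 = 1) (hx : rp < x) (hy : rp < y) (hdx : deriv (potential M a Q σ) x = 0)
    (hxy : potential M a Q σ y = potential M a Q σ x) : y = x := by
  by_contra hyx
  have := radialQuartic_potential_pos hM hQ hrp hσ hx hdx hy hyx
  rw [← hxy, radialQuartic_potential_eq_zero hM hQ hrp hy hσ] at this
  exact this.false

theorem exists_potential_one_gt_horizon (hM : 0 ≤ M) (hQ : 0 ≤ Q) (hrp : IsOuterHorizon M a rp) :
    ∃ r > rp, potential M a Q 1 rp < potential M a Q 1 r := by
  have hrp0 := hrp.pos hM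
  set ω := a / (rp ^ 2 + a ^ 2)
  have hP0 : radialQuartic M a Q ω rp = 0 := by
    rw [radialQuartic_eq_sq_of_delta_eq_zero hrp.delta_eq_zero, div_mul_cancel₀ a (by positivity),
      sub_self, sq, mul_zero]
  obtain ⟨r, hr, hPr⟩ := exists_gt_lt_of_hasDerivAt_neg (hasDerivAt_radialQuartic M a Q ω rp)
    (radialQuarticDeriv_neg_of_lt hQ hrp0 hrp.lt)
  rw [hP0, ← potentialDenom_mul_sub_mul_sub hM hQ hrp hr (one_pow 2)] at hPr
  refine ⟨r, hr, ?_⟩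
  rw [hrp.potential_eq hM]
  have hgap := potential_neg_one_lt_potential_one (Q := Q) hM hQ hrp hr
  have hN := potentialDenom_pos (a := a) hM (hrp0.trans hr)
  by_contra! h
  nlinarith [mul_nonneg hN.le (mul_nonneg (sub_nonneg.2 h) (sub_nonneg.2 (h.trans' hgap.le)))]

theorem exists_potential_neg_one_neg (hM : 0 ≤ M) (ha : 0 ≤ a) (hQ : 0 ≤ Q)
    (hrp : IsOuterHorizon M a rp) : ∃ r > rp, potential M a Q (-1) r < 0 := by
  have hrp0 := hrp.pos hM
  have hr : rp < 3 * M := by nlinarith [hrp.delta_eq_zero, hrp.lt]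
  have hP := potentialDenom_mul_sub_mul_sub (Q := Q) hM hQ hrp hr (one_pow 2) 0
  have hP3M : radialQuartic M a Q 0 (3 * M) < 0 := by
    unfold radialQuartic
    nlinarith [mul_nonneg hQ (sq_nonneg a), mul_pos hrp0 hrp0, hrp.lt]
  refine ⟨3 * M, hr, ?_⟩
  have hpos := potential_one_pos hM ha hQ hrp hr
  have hN := potentialDenom_pos (a := a) hM (hrp0.trans hr)
  by_contra! h
  rw [zero_sub, zero_sub, neg_mul_neg] at hP
  linarith [mul_nonneg hN.le (mul_nonneg hpos.le h)]

theorem exists_deriv_potential_one_eq_zero (hM : 0 ≤ M) (ha : 0 ≤ a) (hQ : 0 ≤ Q)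
    (hrp : IsOuterHorizon M a rp) : ∃ x > rp, deriv (potential M a Q 1) x = 0 := by
  obtain ⟨r, hr, hVr⟩ := exists_potential_one_gt_horizon (Q := Q) hM hQ hrp
  obtain ⟨x, hx, hmax⟩ := exists_isLocalMax_of_tendsto_atTop hr
    (continuousOn_potential hM (hrp.pos hM) Q 1) (tendsto_potential_atTop M a Q 1) hVr
    (potential_one_pos hM ha hQ hrp hr)
  exact ⟨x, hx, hmax.deriv_eq_zero⟩

theorem exists_deriv_potential_neg_one_eq_zero (hM : 0 ≤ M) (ha : 0 ≤ a) (hQ : 0 ≤ Q)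
    (hrp : IsOuterHorizon M a rp) : ∃ x > rp, deriv (potential M a Q (-1)) x = 0 := by
  obtain ⟨r, hr, hVr⟩ := exists_potential_neg_one_neg (Q := Q) hM ha hQ hrp
  have hVrp : 0 ≤ potential M a Q (-1) rp := by
    rw [hrp.potential_eq hM]
    positivity
  obtain ⟨x, hx, hmin⟩ := exists_isLocalMin_of_tendsto_atTop hr
    (continuousOn_potential hM (hrp.pos hM) Q (-1)) (tendsto_potential_atTop M a Q (-1))
    (hVr.trans_le hVrp) hVr
  exact ⟨x, hx, hmin.deriv_eq_zero⟩

end Kerr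

/-- For fixed `𝒬 ≥ 0`, the pseudo potential `V₊(·,𝒬)` has exactly one
critical point in `(r₊, ∞)`, which is a global maximum there, and `V₋(·,𝒬)`
has exactly one critical point, which is a global minimum there. -/
theorem one_extremum_of_potentials (M a Q : ℝ) (hM : 0 < M)
    (ha0 : 0 ≤ a) (haM : a < M) (hQ : 0 ≤ Q)
    (Δ : ℝ → ℝ) (hΔ : ∀ r, Δ r = r ^ 2 - 2 * M * r + a ^ 2)
    (rp : ℝ) (hrp : rp = M + Real.sqrt (M ^ 2 - a ^ 2))
    (Vp Vm : ℝ → ℝ)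
    (hVp : ∀ r, Vp r = (2 * M * a * r +
      Real.sqrt (r * Δ r * ((1 + Q) * r ^ 3 + a ^ 2 * Q * (r + 2 * M)))) /
      (r * (r * (r ^ 2 + a ^ 2) + 2 * M * a ^ 2)))
    (hVm : ∀ r, Vm r = (2 * M * a * r -
      Real.sqrt (r * Δ r * ((1 + Q) * r ^ 3 + a ^ 2 * Q * (r + 2 * M)))) /
      (r * (r * (r ^ 2 + a ^ 2) + 2 * M * a ^ 2))) :
    (∃! x : ℝ, x ∈ Set.Ioi rp ∧ deriv Vp x = 0) ∧
    (∃! x : ℝ, x ∈ Set.Ioi rp ∧ deriv Vm x = 0) ∧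
    (∀ x ∈ Set.Ioi rp, deriv Vp x = 0 → IsMaxOn Vp (Set.Ioi rp) x) ∧
    (∀ x ∈ Set.Ioi rp, deriv Vm x = 0 → IsMinOn Vm (Set.Ioi rp) x) := by
  have hMa : 0 < M ^ 2 - a ^ 2 := by nlinarith
  have hhor : IsOuterHorizon M a rp :=
    ⟨by rw [hrp]; linear_combination Real.sq_sqrt hMa.le,
      hrp ▸ lt_add_of_pos_right M (Real.sqrt_pos.2 hMa)⟩
  obtain rfl : Vp = potential M a Q 1 := funext fun r => by
    rw [hVp, hΔ, potential, potentialDiscr, potentialDenom, one_mul]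
  obtain rfl : Vm = potential M a Q (-1) := funext fun r => by
    rw [hVm, hΔ, potential, potentialDiscr, potentialDenom, neg_one_mul, ← sub_eq_add_neg]
  have hmax x (hx : rp < x) hdx := isMaxOn_potential_one hM.le hQ hhor hx hdx
  have hmin x (hx : rp < x) hdx := isMinOn_potential_neg_one hM.le hQ hhor hx hdx
  obtain ⟨xp, hxp, hdxp⟩ := exists_deriv_potential_one_eq_zero hM.le ha0 hQ hhor
  obtain ⟨xm, hxm, hdxm⟩ := exists_deriv_potential_neg_one_eq_zero hM.le ha0 hQ hhor
  refine ⟨⟨xp, ⟨hxp, hdxp⟩, fun y ⟨hy, hdy⟩ => ?_⟩, ⟨xm, ⟨hxm, hdxm⟩, fun y ⟨hy, hdy⟩ => ?_⟩,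
    hmax, hmin⟩
  · exact eq_of_deriv_potential_eq_zero hM.le hQ hhor (one_pow 2) hxp hy hdxp
      (le_antisymm (hmax xp hxp hdxp hy) (hmax y hy hdy hxp))
  · exact eq_of_deriv_potential_eq_zero hM.le hQ hhor (by norm_num) hxm hy hdxm
      (le_antisymm (hmin y hy hdy hxm) (hmin xm hxm hdxm hy))
end

section
/- Null geodesics with constant θ: the conditions Θ(θ) = 0 and dΘ/dθ(θ) = 0 (for θ ∈ (0,π), θ ≠ π/2, E ≠ 0) are satisfied if and only if L_z = ±aE sin²θ and Q = −a²E² cos⁴θ; in that case K = Q + (aE − L_z)² equals 0 when L_z = aE sin²θ. -/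
/-!
Away from the poles `Θ'(θ) = 2 cos θ (L_z² − a²E² sin⁴θ) / sin³θ`, so off the equator the
stationarity condition is exactly `L_z² = (aE sin²θ)²`. Under that condition
`Θ(θ) = Q + a²E² cos⁴θ`, so `Θ(θ) = 0` pins down `Q`, and for `L_z = aE sin²θ` one gets
`(aE − L_z)² = a²E² cos⁴θ = −Q`.
-/

open Real

noncomputable def polarPotential (a E Lz Q θ : ℝ) : ℝ :=
  Q - (Lz ^ 2 / sin θ ^ 2 - E ^ 2 * a ^ 2) * cos θ ^ 2

lemma cos_ne_zero_of_mem_Ioo_of_ne_pi_div_two {θ : ℝ} (hθ : θ ∈ Set.Ioo 0 π)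
    (hθ2 : θ ≠ π / 2) : cos θ ≠ 0 := fun hc =>
  hθ2 <| injOn_cos (Set.Ioo_subset_Icc_self hθ) ⟨by positivity, by linarith [pi_pos]⟩
    (hc.trans cos_pi_div_two.symm)

lemma hasDerivAt_polarPotential (a E Lz Q : ℝ) {θ : ℝ} (hs : sin θ ≠ 0) :
    HasDerivAt (polarPotential a E Lz Q)
      (2 * cos θ * (Lz ^ 2 - (a * E * sin θ ^ 2) ^ 2) / sin θ ^ 3) θ := by
  have hsin : HasDerivAt (fun x => sin x ^ 2) (2 * sin θ * cos θ) θ := by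
    simpa using (hasDerivAt_sin θ).fun_pow 2
  have hcos : HasDerivAt (fun x => cos x ^ 2) (2 * cos θ * -sin θ) θ := by
    simpa using (hasDerivAt_cos θ).fun_pow 2
  have h := (((hasDerivAt_const θ (Lz ^ 2)).fun_div hsin (pow_ne_zero 2 hs)).sub_const
    (E ^ 2 * a ^ 2)).fun_mul hcos |>.const_sub Q
  refine h.congr_deriv ?_
  field_simp
  linear_combination (2 * Lz ^ 2 * cos θ) * sin_sq θ

lemma deriv_polarPotential_eq_zero_iff (a E Lz Q : ℝ) {θ : ℝ} (hs : sin θ ≠ 0)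
    (hc : cos θ ≠ 0) :
    deriv (polarPotential a E Lz Q) θ = 0 ↔ Lz ^ 2 = (a * E * sin θ ^ 2) ^ 2 := by
  rw [(hasDerivAt_polarPotential a E Lz Q hs).deriv, div_eq_zero_iff, mul_eq_zero,
    mul_eq_zero, sub_eq_zero]
  simp [hs, hc]

lemma polarPotential_of_sq_eq {a E Lz Q θ : ℝ}
    (hLz : Lz ^ 2 = (a * E * sin θ ^ 2) ^ 2) :
    polarPotential a E Lz Q θ = Q + a ^ 2 * E ^ 2 * cos θ ^ 4 := by
  rw [polarPotential, hLz]
  field_simp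
  linear_combination -(a ^ 2 * E ^ 2 * cos θ ^ 2) * sin_sq θ

lemma polarPotential_eq_zero_and_deriv_eq_zero_iff {a E Lz Q θ : ℝ} (hs : sin θ ≠ 0)
    (hc : cos θ ≠ 0) :
    polarPotential a E Lz Q θ = 0 ∧ deriv (polarPotential a E Lz Q) θ = 0 ↔
      Lz ^ 2 = (a * E * sin θ ^ 2) ^ 2 ∧ Q = -(a ^ 2 * E ^ 2 * cos θ ^ 4) := by
  rw [deriv_polarPotential_eq_zero_iff a E Lz Q hs hc, and_comm]
  refine and_congr_right fun hLz => ?_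
  rw [polarPotential_of_sq_eq hLz, add_eq_zero_iff_eq_neg]

theorem constant_theta_geodesics_general (a E : ℝ) (θ : ℝ) (hθ : θ ∈ Set.Ioo 0 Real.pi)
    (hθ2 : θ ≠ Real.pi / 2)
    (Lz Q : ℝ)
    (Θ : ℝ → ℝ)
    (hΘ : ∀ x, Θ x = Q - (Lz ^ 2 / Real.sin x ^ 2 - E ^ 2 * a ^ 2) * Real.cos x ^ 2) :
    (Θ θ = 0 ∧ deriv Θ θ = 0 ↔
      (Lz = a * E * Real.sin θ ^ 2 ∨ Lz = -(a * E * Real.sin θ ^ 2)) ∧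
        Q = -(a ^ 2 * E ^ 2 * Real.cos θ ^ 4)) ∧
    (Θ θ = 0 ∧ deriv Θ θ = 0 → Lz = a * E * Real.sin θ ^ 2 →
      Q + (a * E - Lz) ^ 2 = 0) := by
  have hs : sin θ ≠ 0 := (sin_pos_of_pos_of_lt_pi hθ.1 hθ.2).ne'
  have hc := cos_ne_zero_of_mem_Ioo_of_ne_pi_div_two hθ hθ2
  obtain rfl : Θ = polarPotential a E Lz Q := funext hΘ
  rw [polarPotential_eq_zero_and_deriv_eq_zero_iff hs hc, sq_eq_sq_iff_eq_or_eq_neg]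
  refine ⟨Iff.rfl, fun ⟨_, hQ⟩ hLz => ?_⟩
  rw [hQ, hLz, sin_sq]
  ring

/-- Null geodesics at constant θ: for `θ ∈ (0,π)`, `θ ≠ π/2`, `E ≠ 0`,
the conditions `Θ(θ) = 0` and `(dΘ/dθ)(θ) = 0` hold if and only if
`L_z = ± aE sin²θ` and `Q = −a²E² cos⁴θ`; moreover with the plus sign
`K = Q + (aE − L_z)² = 0`. -/
theorem constant_theta_geodesics (a M E : ℝ) (ha : 0 < a) (hM : 0 < M)
    (hE : E ≠ 0) (θ : ℝ) (hθ : θ ∈ Set.Ioo 0 Real.pi) (hθ2 : θ ≠ Real.pi / 2)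
    (Lz Q : ℝ)
    (Θ : ℝ → ℝ)
    (hΘ : ∀ x, Θ x = Q - (Lz ^ 2 / Real.sin x ^ 2 - E ^ 2 * a ^ 2) * Real.cos x ^ 2) :
    (Θ θ = 0 ∧ deriv Θ θ = 0 ↔
      (Lz = a * E * Real.sin θ ^ 2 ∨ Lz = -(a * E * Real.sin θ ^ 2)) ∧
        Q = -(a ^ 2 * E ^ 2 * Real.cos θ ^ 4)) ∧
    (Θ θ = 0 ∧ deriv Θ θ = 0 → Lz = a * E * Real.sin θ ^ 2 →
      Q + (a * E - Lz) ^ 2 = 0) :=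
  constant_theta_geodesics_general a E θ hθ hθ2 Lz Q Θ hΘ
end

section
/- The three radii r₁ = 2M(1 + cos((2/3)arccos(−a/M))), r₂ = 2M(1 + cos((2/3)arccos(a/M))), r₃ = M + 2√(M² − a²/3)·cos((1/3)arccos(M(M²−a²)/(M²−a²/3)^{3/2})) satisfy M < r₊ < r₁ < r₃ < r₂ < 4M for all a ∈ (0, M). -/
/-!
With `x = a / M`, the radii `r₁, r₂` are the trigonometric roots `2M(1 + c)` of the equatorial
cubic `P(r) = r(r - 3M)² - 4a²M`, where `4c³ - 3c = 2x² - 1` by the triple-angle formula, and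
`r₃ = M + 2sc` with `s² = M² - a²/3` is the trigonometric root of the polar cubic `Q`.
The angles place `r₁ ∈ (M, 3M)`, `r₂ ∈ (3M, 4M)` and `r₃ ∈ [M + s, 3M)`.
Since `P' = 3(r - M)(r - 3M)`, `P` decreases on `[M, 3M]`, and `P(r₊) > 0 = P(r₁)` gives `r₊ < r₁`.
Since `Q' = 3((r - M)² - s²)`, `Q` increases on `[M + s, ∞)`, and `Q(r₁) < 0 = Q(r₃)` gives
`r₁ < r₃`.
-/

open Real Set

noncomputable section

def outerHorizon (M a : ℝ) : ℝ := M + √(M ^ 2 - a ^ 2)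

def progradeRadius (M a : ℝ) : ℝ := 2 * M * (1 + cos ((2 / 3) * arccos (-(a / M))))

def retrogradeRadius (M a : ℝ) : ℝ := 2 * M * (1 + cos ((2 / 3) * arccos (a / M)))

def polarRadius (M a : ℝ) : ℝ :=
  M + 2 * √(M ^ 2 - a ^ 2 / 3) *
    cos ((1 / 3) * arccos (M * (M ^ 2 - a ^ 2) / (M ^ 2 - a ^ 2 / 3) ^ ((3 : ℝ) / 2)))

def equatorialOrbitPoly (M a r : ℝ) : ℝ := r ^ 3 - 6 * M * r ^ 2 + 9 * M ^ 2 * r - 4 * a ^ 2 * M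

def polarOrbitPoly (M a r : ℝ) : ℝ := r ^ 3 - 3 * M * r ^ 2 + a ^ 2 * r + a ^ 2 * M

end

theorem cos_two_thirds_arccos_cubic {y : ℝ} (hy₁ : -1 ≤ y) (hy₂ : y ≤ 1) :
    4 * cos (2 / 3 * arccos y) ^ 3 - 3 * cos (2 / 3 * arccos y) = 2 * y ^ 2 - 1 := by
  rw [← cos_three_mul, show 3 * (2 / 3 * arccos y) = 2 * arccos y by ring, cos_two_mul,
    cos_arccos hy₁ hy₂]

theorem cos_one_third_arccos_cubic {y : ℝ} (hy₁ : -1 ≤ y) (hy₂ : y ≤ 1) :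
    4 * cos (1 / 3 * arccos y) ^ 3 - 3 * cos (1 / 3 * arccos y) = y := by
  rw [← cos_three_mul, show 3 * (1 / 3 * arccos y) = arccos y by ring, cos_arccos hy₁ hy₂]

theorem cos_mul_arccos_mem_Ioo {k y : ℝ} (hk : 0 < k) (hk' : k ≤ 2 / 3) (hy : 0 < y)
    (hy' : y < 1) : cos (k * arccos y) ∈ Ioo (1 / 2) 1 := by
  have hA₀ : 0 < arccos y := arccos_pos.2 hy'
  have hA₁ : arccos y < π / 2 := arccos_lt_pi_div_two.2 hy
  have hkA : k * arccos y < π / 3 := by nlinarith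
  constructor
  · rw [← cos_pi_div_three]
    exact cos_lt_cos_of_nonneg_of_le_pi (by positivity) (by linarith [pi_pos]) hkA
  · rw [← cos_zero]
    exact cos_lt_cos_of_nonneg_of_le_pi le_rfl (by linarith [pi_pos]) (by positivity)

theorem abs_cos_lt_half {φ : ℝ} (h₁ : π / 3 < φ) (h₂ : φ < 2 * π / 3) : |cos φ| < 1 / 2 := by
  have hπ := pi_pos
  rw [abs_lt, ← cos_pi_div_three]
  constructor
  · rw [neg_lt, ← cos_pi_sub]
    exact cos_lt_cos_of_nonneg_of_le_pi (by positivity) (by linarith) (by linarith)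
  · exact cos_lt_cos_of_nonneg_of_le_pi (by positivity) (by linarith) h₁

theorem abs_cos_two_thirds_arccos_neg_lt_half {y : ℝ} (hy : 0 < y) (hy' : y < 1) :
    |cos (2 / 3 * arccos (-y))| < 1 / 2 := by
  have hA₀ : 0 < arccos y := arccos_pos.2 hy'
  have hA₁ : arccos y < π / 2 := arccos_lt_pi_div_two.2 hy
  rw [arccos_neg]
  exact abs_cos_lt_half (by linarith) (by linarith)

section

variable {M a : ℝ}

theorem equatorialOrbitPoly_antitoneOn (M a : ℝ) :
    AntitoneOn (equatorialOrbitPoly M a) (Icc M (3 * M)) := by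
  rintro u ⟨hMu, hu⟩ v ⟨hMv, hv⟩ huv
  simp only [equatorialOrbitPoly]
  nlinarith [mul_nonneg (mul_nonneg (sub_nonneg.2 huv) (sub_nonneg.2 hMu)) (sub_nonneg.2 hu),
    mul_nonneg (mul_nonneg (sub_nonneg.2 huv) (sub_nonneg.2 hMv)) (sub_nonneg.2 hv),
    mul_nonneg (mul_nonneg (sub_nonneg.2 huv) (sub_nonneg.2 hMu)) (sub_nonneg.2 hv),
    mul_nonneg (mul_nonneg (sub_nonneg.2 huv) (sub_nonneg.2 hMv)) (sub_nonneg.2 hu)]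

theorem polarOrbitPoly_monotoneOn {s : ℝ} (hs : 0 ≤ s) (hs₂ : s ^ 2 = M ^ 2 - a ^ 2 / 3) :
    MonotoneOn (polarOrbitPoly M a) (Ici (M + s)) := by
  rintro u hu v hv huv
  simp only [mem_Ici] at hu hv
  simp only [polarOrbitPoly]
  nlinarith [mul_nonneg (sub_nonneg.2 huv) (mul_nonneg (sub_nonneg.2 hu) (sub_nonneg.2 hv)),
    mul_nonneg (sub_nonneg.2 huv) (mul_nonneg hs (sub_nonneg.2 hu)),
    mul_nonneg (sub_nonneg.2 huv) (mul_nonneg hs (sub_nonneg.2 hv)),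
    mul_nonneg (sub_nonneg.2 huv) (sq_nonneg (u - M - s)),
    mul_nonneg (sub_nonneg.2 huv) (sq_nonneg (v - M - s))]

theorem lt_outerHorizon (ha : a ^ 2 < M ^ 2) : M < outerHorizon M a := by
  unfold outerHorizon
  linarith [sqrt_pos.2 (sub_pos.2 ha)]

theorem outerHorizon_le (hM : 0 ≤ M) : outerHorizon M a ≤ 2 * M := by
  unfold outerHorizon
  linarith [(sqrt_le_left hM).2 (sub_le_self (M ^ 2) (sq_nonneg a))]

theorem equatorialOrbitPoly_outerHorizon_pos (hM : 0 < M) (ha : a ^ 2 < M ^ 2) :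
    0 < equatorialOrbitPoly M a (outerHorizon M a) := by
  have hw : √(M ^ 2 - a ^ 2) ^ 2 = M ^ 2 - a ^ 2 := sq_sqrt (by linarith)
  have hw₀ : 0 < √(M ^ 2 - a ^ 2) := sqrt_pos.2 (by linarith)
  have key : equatorialOrbitPoly M a (outerHorizon M a)
      = √(M ^ 2 - a ^ 2) ^ 2 * (M + √(M ^ 2 - a ^ 2)) := by
    unfold equatorialOrbitPoly outerHorizon
    linear_combination (-4 * M) * hw
  rw [key]
  positivity

theorem progradeRadius_cos_cubic (hM : 0 < M) (ha : 0 < a) (haM : a < M) :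
    M ^ 2 * (4 * cos (2 / 3 * arccos (-(a / M))) ^ 3 - 3 * cos (2 / 3 * arccos (-(a / M))))
      = 2 * a ^ 2 - M ^ 2 := by
  have hx₁ : a / M < 1 := (div_lt_one hM).2 haM
  have hx₀ : 0 < a / M := div_pos ha hM
  rw [cos_two_thirds_arccos_cubic (by linarith) (by linarith)]
  field_simp

theorem progradeRadius_mem_Ioo (hM : 0 < M) (ha : 0 < a) (haM : a < M) :
    progradeRadius M a ∈ Ioo M (3 * M) := by
  have hc := abs_lt.1 <| abs_cos_two_thirds_arccos_neg_lt_half (div_pos ha hM)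
    ((div_lt_one hM).2 haM)
  unfold progradeRadius
  constructor <;> nlinarith

theorem equatorialOrbitPoly_progradeRadius (hM : 0 < M) (ha : 0 < a) (haM : a < M) :
    equatorialOrbitPoly M a (progradeRadius M a) = 0 := by
  unfold equatorialOrbitPoly progradeRadius
  linear_combination 2 * M * progradeRadius_cos_cubic hM ha haM

theorem polarOrbitPoly_progradeRadius_neg (hM : 0 < M) (ha : 0 < a) (haM : a < M) :
    polarOrbitPoly M a (progradeRadius M a) < 0 := by
  have hc := abs_lt.1 <| abs_cos_two_thirds_arccos_neg_lt_half (div_pos ha hM)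
    ((div_lt_one hM).2 haM)
  set c := cos (2 / 3 * arccos (-(a / M)))
  -- modulo the cubic satisfied by `c`, `2 Q(2M(1 + c))` factors completely
  have key : 2 * polarOrbitPoly M a (progradeRadius M a)
      = M ^ 3 * (1 + c) * (2 * c - 1) * (2 * c + 1) * (2 * c + 5) := by
    unfold polarOrbitPoly progradeRadius
    linear_combination (-(M * (2 * c + 3))) * progradeRadius_cos_cubic hM ha haM
  have hpos : 0 < M ^ 3 * (1 + c) * (1 - 2 * c) * (2 * c + 1) * (2 * c + 5) := by
    have := pow_pos hM 3
    have : 0 < 1 + c := by linarith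
    have : 0 < 1 - 2 * c := by linarith
    have : 0 < 2 * c + 1 := by linarith
    have : 0 < 2 * c + 5 := by linarith
    positivity
  linarith

theorem outerHorizon_lt_progradeRadius (hM : 0 < M) (ha : 0 < a) (haM : a < M) :
    outerHorizon M a < progradeRadius M a := by
  have ha₂ : a ^ 2 < M ^ 2 := pow_lt_pow_left₀ haM ha.le two_ne_zero
  have hr := progradeRadius_mem_Ioo hM ha haM
  by_contra! h
  have := equatorialOrbitPoly_antitoneOn M a ⟨hr.1.le, hr.2.le⟩
    ⟨(lt_outerHorizon ha₂).le, by linarith [outerHorizon_le (a := a) hM.le]⟩ h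
  linarith [equatorialOrbitPoly_outerHorizon_pos hM ha₂, equatorialOrbitPoly_progradeRadius hM ha haM]

theorem retrogradeRadius_mem_Ioo (hM : 0 < M) (ha : 0 < a) (haM : a < M) :
    retrogradeRadius M a ∈ Ioo (3 * M) (4 * M) := by
  have hc := cos_mul_arccos_mem_Ioo (by norm_num) le_rfl (div_pos ha hM) ((div_lt_one hM).2 haM)
  unfold retrogradeRadius
  constructor <;> nlinarith [hc.1, hc.2]

theorem sq_mul_sub_sq_lt_cube (ha : a ≠ 0) (haM : a ^ 2 ≤ M ^ 2) :
    (M * (M ^ 2 - a ^ 2)) ^ 2 < (M ^ 2 - a ^ 2 / 3) ^ 3 := by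
  have key : (M ^ 2 - a ^ 2 / 3) ^ 3 - (M * (M ^ 2 - a ^ 2)) ^ 2
      = a ^ 2 * (M ^ 2 + a ^ 2 / 3) * (M ^ 2 - a ^ 2) + 8 / 27 * (a ^ 2) ^ 3 := by ring
  have : 0 < (a ^ 2) ^ 3 := by positivity
  have : 0 ≤ a ^ 2 * (M ^ 2 + a ^ 2 / 3) * (M ^ 2 - a ^ 2) := by
    have := sub_nonneg.2 haM
    positivity
  linarith

theorem polarRadius_eq (hs : 0 ≤ M ^ 2 - a ^ 2 / 3) :
    polarRadius M a = M + 2 * √(M ^ 2 - a ^ 2 / 3) *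
      cos (1 / 3 * arccos (M * (M ^ 2 - a ^ 2) / √(M ^ 2 - a ^ 2 / 3) ^ 3)) := by
  rw [polarRadius, rpow_div_two_eq_sqrt _ hs]
  norm_cast

theorem polarRadius_arccos_arg_mem_Ioo (hM : 0 < M) (ha : 0 < a) (haM : a < M) :
    M * (M ^ 2 - a ^ 2) / √(M ^ 2 - a ^ 2 / 3) ^ 3 ∈ Ioo 0 1 := by
  have ha₂ : a ^ 2 < M ^ 2 := pow_lt_pow_left₀ haM ha.le two_ne_zero
  have hs : 0 < M ^ 2 - a ^ 2 / 3 := by linarith [sq_nonneg a]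
  have hpos : 0 < √(M ^ 2 - a ^ 2 / 3) ^ 3 := pow_pos (sqrt_pos.2 hs) 3
  refine ⟨div_pos (mul_pos hM (by linarith)) hpos, (div_lt_one hpos).2 ?_⟩
  refine lt_of_pow_lt_pow_left₀ 2 hpos.le ?_
  rw [← pow_mul, show 3 * 2 = 2 * 3 from rfl, pow_mul, sq_sqrt hs.le]
  exact sq_mul_sub_sq_lt_cube ha.ne' ha₂.le

theorem polarRadius_mem_Ico (hM : 0 < M) (ha : 0 < a) (haM : a < M) :
    polarRadius M a ∈ Ico (M + √(M ^ 2 - a ^ 2 / 3)) (3 * M) := by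
  have ha₂ : a ^ 2 < M ^ 2 := pow_lt_pow_left₀ haM ha.le two_ne_zero
  have hs : 0 < M ^ 2 - a ^ 2 / 3 := by linarith [sq_nonneg a]
  have hs₀ : 0 < √(M ^ 2 - a ^ 2 / 3) := sqrt_pos.2 hs
  have hsM : √(M ^ 2 - a ^ 2 / 3) < M := (sqrt_lt' hM).2 (by linarith [pow_pos ha 2])
  have hK := polarRadius_arccos_arg_mem_Ioo hM ha haM
  have hc := cos_mul_arccos_mem_Ioo (k := 1 / 3) (by norm_num) (by norm_num) hK.1 hK.2
  rw [polarRadius_eq hs.le]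
  constructor <;> nlinarith [hc.1, hc.2]

theorem polarOrbitPoly_polarRadius (hM : 0 < M) (ha : 0 < a) (haM : a < M) :
    polarOrbitPoly M a (polarRadius M a) = 0 := by
  have hs : 0 < M ^ 2 - a ^ 2 / 3 := by
    linarith [sq_nonneg a, pow_lt_pow_left₀ haM ha.le two_ne_zero]
  have hs₂ : √(M ^ 2 - a ^ 2 / 3) ^ 2 = M ^ 2 - a ^ 2 / 3 := sq_sqrt hs.le
  have hK := polarRadius_arccos_arg_mem_Ioo hM ha haM
  have hc := cos_one_third_arccos_cubic (by linarith [hK.1]) hK.2.le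
  rw [polarRadius_eq hs.le]
  set s := √(M ^ 2 - a ^ 2 / 3)
  set c := cos (1 / 3 * arccos (M * (M ^ 2 - a ^ 2) / s ^ 3))
  have hs₀ : s ≠ 0 := (sqrt_pos.2 hs).ne'
  have key : s ^ 3 * (4 * c ^ 3 - 3 * c) = M * (M ^ 2 - a ^ 2) := by
    rw [hc]
    field_simp
  unfold polarOrbitPoly
  linear_combination 2 * key + 6 * s * c * hs₂

theorem progradeRadius_lt_polarRadius (hM : 0 < M) (ha : 0 < a) (haM : a < M) :
    progradeRadius M a < polarRadius M a := by
  have hs : 0 ≤ M ^ 2 - a ^ 2 / 3 := by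
    linarith [sq_nonneg a, pow_lt_pow_left₀ haM ha.le two_ne_zero]
  have hr := polarRadius_mem_Ico hM ha haM
  by_contra! h
  have := polarOrbitPoly_monotoneOn (sqrt_nonneg _) (sq_sqrt hs) hr.1 (hr.1.trans h) h
  linarith [polarOrbitPoly_polarRadius hM ha haM, polarOrbitPoly_progradeRadius_neg hM ha haM]

end

/-- Ordering of the trapping radii: for all `a ∈ (0, M)`,
`M < r₊ < r₁ < r₃ < r₂ < 4M`. -/
theorem trapping_radii_order (M a : ℝ) (hM : 0 < M) (ha : 0 < a) (haM : a < M)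
    (rp r1 r2 r3 : ℝ)
    (hrp : rp = M + Real.sqrt (M ^ 2 - a ^ 2))
    (hr1 : r1 = 2 * M * (1 + Real.cos ((2 / 3) * Real.arccos (-(a / M)))))
    (hr2 : r2 = 2 * M * (1 + Real.cos ((2 / 3) * Real.arccos (a / M))))
    (hr3 : r3 = M + 2 * Real.sqrt (M ^ 2 - a ^ 2 / 3) *
      Real.cos ((1 / 3) * Real.arccos
        (M * (M ^ 2 - a ^ 2) / (M ^ 2 - a ^ 2 / 3) ^ ((3 : ℝ) / 2)))) :
    M < rp ∧ rp < r1 ∧ r1 < r3 ∧ r3 < r2 ∧ r2 < 4 * M := by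
  obtain rfl : rp = outerHorizon M a := hrp
  obtain rfl : r1 = progradeRadius M a := hr1
  obtain rfl : r2 = retrogradeRadius M a := hr2
  obtain rfl : r3 = polarRadius M a := hr3
  have hr₂ := retrogradeRadius_mem_Ioo hM ha haM
  exact ⟨lt_outerHorizon (pow_lt_pow_left₀ haM ha.le two_ne_zero),
    outerHorizon_lt_progradeRadius hM ha haM, progradeRadius_lt_polarRadius hM ha haM,
    (polarRadius_mem_Ico hM ha haM).2.trans hr₂.1, hr₂.2⟩
end

section
/- The polynomial A(r) = r³ − 3Mr² + a²r + a²M factors as (r − r₃)P₂(r) where P₂ is a quadratic polynomial that is strictly positive for all r > r₊, and B(r) = r³(r³ − 6Mr² + 9M²r − 4a²M) factors as (r − r₁)(r − r₂)P₄(r) with P₄ strictly positive for r > r₊. -/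
set_option maxHeartbeats 1000000

private lemma cube_bound_aux (M a R : ℝ) (hM : 0 < M) (ha : 0 < a) (haM : a < M)
    (hR : 0 < R) (hR2 : R ^ 2 = M ^ 2 - a ^ 2 / 3) :
    M * (M ^ 2 - a ^ 2) ≤ R ^ 3 := by
  have h2 : a ^ 2 ≤ M ^ 2 := by nlinarith
  have h4 : a ^ 4 ≤ M ^ 4 := by nlinarith
  have h1 : (M * (M ^ 2 - a ^ 2)) ^ 2 ≤ (R ^ 3) ^ 2 := by
    have heq : (R ^ 3) ^ 2 = (M ^ 2 - a ^ 2 / 3) ^ 3 := by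
      rw [show (R ^ 3) ^ 2 = (R ^ 2) ^ 3 by ring, hR2]
    rw [heq]
    nlinarith [mul_nonneg (sq_nonneg a) (sub_nonneg.mpr h4),
      mul_nonneg (sq_nonneg a) (sub_nonneg.mpr h2),
      mul_nonneg (mul_nonneg (sq_nonneg a) (sq_nonneg a)) (sub_nonneg.mpr h2)]
  have hnum : 0 ≤ M * (M ^ 2 - a ^ 2) := by nlinarith
  have hR3 : 0 < R ^ 3 := by positivity
  nlinarith [h1, hR3, hnum]

private lemma P2_pos_aux (M a S R c r : ℝ) (hM : 0 < M) (haM2 : a ^ 2 < M ^ 2)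
    (hS : 0 < S) (hR : 0 < R) (hS2 : S ^ 2 = M ^ 2 - a ^ 2)
    (hR2 : R ^ 2 = M ^ 2 - a ^ 2 / 3) (hc0 : 0 < c) (hc34 : 3 / 4 ≤ c ^ 2)
    (hr : M + S < r) :
    0 < r ^ 2 + (M + 2 * R * c - 3 * M) * r +
      ((M + 2 * R * c) ^ 2 - 3 * M * (M + 2 * R * c) + a ^ 2) := by
  have hPrp : 0 < 4 * R ^ 2 * c ^ 2 + 2 * R * S * c - 2 * M ^ 2 := by
    nlinarith [mul_nonneg (sq_nonneg R) (by linarith : (0:ℝ) ≤ c ^ 2 - 3 / 4),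
      mul_nonneg (mul_nonneg hR.le hS.le) hc0.le]
  have h1 : 0 < (r - (M + S)) * (r + S - M + 2 * R * c) :=
    mul_pos (by linarith) (by nlinarith [mul_pos hR hc0])
  nlinarith [hPrp, h1, hS2]

/-- Factorizations `A(r) = (r − r₃)P₂(r)` and
`B(r) = (r − r₁)(r − r₂)P₄(r)` where `P₂` (monic quadratic) and `P₄`
(monic quartic) are strictly positive on `(r₊, ∞)`. -/
theorem trapping_polynomial_factorizations (M a : ℝ) (hM : 0 < M)
    (ha : 0 < a) (haM : a < M)
    (rp r1 r2 r3 : ℝ)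
    (hrp : rp = M + Real.sqrt (M ^ 2 - a ^ 2))
    (hr1 : r1 = 2 * M * (1 + Real.cos ((2 / 3) * Real.arccos (-(a / M)))))
    (hr2 : r2 = 2 * M * (1 + Real.cos ((2 / 3) * Real.arccos (a / M))))
    (hr3 : r3 = M + 2 * Real.sqrt (M ^ 2 - a ^ 2 / 3) *
      Real.cos ((1 / 3) * Real.arccos
        (M * (M ^ 2 - a ^ 2) / (M ^ 2 - a ^ 2 / 3) ^ ((3 : ℝ) / 2)))) :
    (∃ b c : ℝ,
      (∀ r : ℝ, r ^ 3 - 3 * M * r ^ 2 + a ^ 2 * r + a ^ 2 * M =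
        (r - r3) * (r ^ 2 + b * r + c)) ∧
      ∀ r : ℝ, rp < r → 0 < r ^ 2 + b * r + c) ∧
    (∃ p q s t : ℝ,
      (∀ r : ℝ, r ^ 3 * (r ^ 3 - 6 * M * r ^ 2 + 9 * M ^ 2 * r - 4 * a ^ 2 * M) =
        (r - r1) * (r - r2) * (r ^ 4 + p * r ^ 3 + q * r ^ 2 + s * r + t)) ∧
      ∀ r : ℝ, rp < r → 0 < r ^ 4 + p * r ^ 3 + q * r ^ 2 + s * r + t) := by
  have hMa2 : a ^ 2 < M ^ 2 := by nlinarith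
  set S := Real.sqrt (M ^ 2 - a ^ 2) with hSdef
  set R := Real.sqrt (M ^ 2 - a ^ 2 / 3) with hRdef
  have hS2 : S ^ 2 = M ^ 2 - a ^ 2 := Real.sq_sqrt (by linarith)
  have hR2 : R ^ 2 = M ^ 2 - a ^ 2 / 3 := Real.sq_sqrt (by nlinarith)
  have hS : 0 < S := Real.sqrt_pos.mpr (by linarith)
  have hR : 0 < R := Real.sqrt_pos.mpr (by nlinarith)
  have hz : (0:ℝ) ≤ M ^ 2 - a ^ 2 / 3 := by nlinarith
  have h32 : (M ^ 2 - a ^ 2 / 3) ^ ((3 : ℝ) / 2) = R ^ 3 := by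
    rw [show ((3:ℝ)/2) = (1/2) * (3:ℕ) by norm_num, Real.rpow_mul hz,
      ← Real.sqrt_eq_rpow, Real.rpow_natCast]
  set y := M * (M ^ 2 - a ^ 2) / (M ^ 2 - a ^ 2 / 3) ^ ((3 : ℝ) / 2) with hydef
  have hy : y = M * (M ^ 2 - a ^ 2) / R ^ 3 := by rw [hydef, h32]
  have hR3 : 0 < R ^ 3 := by positivity
  have hy0 : 0 ≤ y := by
    rw [hy]
    apply div_nonneg _ hR3.le
    nlinarith
  have hy1 : y ≤ 1 := by
    rw [hy, div_le_one hR3]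
    exact cube_bound_aux M a R hM ha haM hR hR2
  set c := Real.cos ((1 / 3) * Real.arccos y) with hcdef
  have hcos3 : 4 * c ^ 3 - 3 * c = y := by
    have h3 : Real.cos (3 * ((1 / 3) * Real.arccos y)) = y := by
      rw [show 3 * ((1/3) * Real.arccos y) = Real.arccos y by ring]
      exact Real.cos_arccos (by linarith) hy1
    rw [Real.cos_three_mul] at h3
    exact h3
  have harccos_le : Real.arccos y ≤ Real.pi / 2 := Real.arccos_le_pi_div_two.mpr hy0
  have hc_ge : Real.sqrt 3 / 2 ≤ c := by
    have h6 : Real.cos (Real.pi / 6) ≤ c := by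
      apply Real.cos_le_cos_of_nonneg_of_le_pi
      · linarith [Real.arccos_nonneg y]
      · linarith [Real.pi_pos]
      · linarith
    rwa [Real.cos_pi_div_six] at h6
  have hsqrt3 : (0:ℝ) < Real.sqrt 3 := Real.sqrt_pos.mpr (by norm_num)
  have hc0 : 0 < c := by linarith
  have hc34 : 3 / 4 ≤ c ^ 2 := by
    have h3 : (Real.sqrt 3) ^ 2 = 3 := Real.sq_sqrt (by norm_num)
    have hmul := mul_le_mul hc_ge hc_ge (by linarith) hc0.le
    linarith only [hmul, h3]
  have hr3' : r3 = M + 2 * R * c := by rw [hr3]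
  have key : R ^ 3 * (4 * c ^ 3 - 3 * c) = M * (M ^ 2 - a ^ 2) := by
    rw [hcos3, hy]
    field_simp
  have hA3 : r3 ^ 3 - 3 * M * r3 ^ 2 + a ^ 2 * r3 + a ^ 2 * M = 0 := by
    rw [hr3']
    linear_combination 2 * key + (6 * R * c) * hR2
  refine ⟨⟨r3 - 3 * M, r3 ^ 2 - 3 * M * r3 + a ^ 2, ?_, ?_⟩, ?_⟩
  · intro r
    linear_combination hA3
  · intro r hr
    rw [hrp] at hr
    rw [hr3']
    exact P2_pos_aux M a S R c r hM hMa2 hS hR hS2 hR2 hc0 hc34 hr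
  -- Part B
  · have haM1 : a / M < 1 := (div_lt_one hM).mpr haM
    have haM0 : 0 < a / M := div_pos ha hM
    have haMm1 : -1 ≤ a / M := by linarith
    set α := Real.arccos (a / M) with hαdef
    have hα0 : 0 < α := Real.arccos_pos.mpr haM1
    have hα2 : α < Real.pi / 2 := Real.arccos_lt_pi_div_two.mpr haM0
    have hcosα : Real.cos α = a / M := Real.cos_arccos haMm1 haM1.le
    have hr1' : r1 = 2 * M * (1 + Real.cos ((2/3) * (Real.pi - α))) := by
      rw [hr1, Real.arccos_neg]
    set c1 := Real.cos ((2/3) * (Real.pi - α)) with hc1def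
    set c2 := Real.cos ((2/3) * α) with hc2def
    have hcos2α : Real.cos (2 * α) = 2 * (a / M) ^ 2 - 1 := by
      rw [Real.cos_two_mul, hcosα]
    have hdiv : M ^ 2 * (2 * (a / M) ^ 2 - 1) = 2 * a ^ 2 - M ^ 2 := by
      field_simp
    have h3c2 : M ^ 2 * (4 * c2 ^ 3 - 3 * c2) = 2 * a ^ 2 - M ^ 2 := by
      have h : Real.cos (3 * ((2/3) * α)) = 2 * (a / M) ^ 2 - 1 := by
        rw [show 3 * ((2/3) * α) = 2 * α by ring, hcos2α]
      rw [Real.cos_three_mul] at h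
      calc M ^ 2 * (4 * c2 ^ 3 - 3 * c2) = M ^ 2 * (2 * (a / M) ^ 2 - 1) := by
            rw [← h]
        _ = 2 * a ^ 2 - M ^ 2 := hdiv
    have h3c1 : M ^ 2 * (4 * c1 ^ 3 - 3 * c1) = 2 * a ^ 2 - M ^ 2 := by
      have h : Real.cos (3 * ((2/3) * (Real.pi - α))) = 2 * (a / M) ^ 2 - 1 := by
        rw [show 3 * ((2/3) * (Real.pi - α)) = 2 * Real.pi - 2 * α by ring,
          Real.cos_two_pi_sub, hcos2α]
      rw [Real.cos_three_mul] at h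
      calc M ^ 2 * (4 * c1 ^ 3 - 3 * c1) = M ^ 2 * (2 * (a / M) ^ 2 - 1) := by
            rw [← h]
        _ = 2 * a ^ 2 - M ^ 2 := hdiv
    have hC1 : r1 ^ 3 - 6 * M * r1 ^ 2 + 9 * M ^ 2 * r1 - 4 * a ^ 2 * M = 0 := by
      rw [hr1']
      linear_combination 2 * M * h3c1
    have hC2 : r2 ^ 3 - 6 * M * r2 ^ 2 + 9 * M ^ 2 * r2 - 4 * a ^ 2 * M = 0 := by
      rw [hr2]
      linear_combination 2 * M * h3c2
    have hc1c2 : c1 < c2 := by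
      apply Real.cos_lt_cos_of_nonneg_of_le_pi
      · linarith [hα0.le]
      · linarith [Real.pi_pos]
      · linarith
    have hlt : r1 < r2 := by
      have hmul := mul_pos hM (sub_pos.mpr hc1c2)
      rw [hr1', hr2]
      linarith only [hmul]
    have hd : r1 - r2 ≠ 0 := sub_ne_zero.mpr hlt.ne
    have hG' : (r1 - r2) * (r1 * r2) =
        (r1 - r2) * ((r1 + r2) ^ 2 - 6 * M * (r1 + r2) + 9 * M ^ 2) := by
      linear_combination hC2 - hC1
    have hG : r1 * r2 = (r1 + r2) ^ 2 - 6 * M * (r1 + r2) + 9 * M ^ 2 :=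
      mul_left_cancel₀ hd hG'
    have hprod : (r1 + r2 - 6 * M) * (r1 * r2) = -(4 * a ^ 2 * M) := by
      linear_combination (-(1:ℝ)/2) * hC1 + (-(1:ℝ)/2) * hC2 + (-(r1 + r2)/2) * hG
    have hsum : c1 + c2 = Real.cos ((2/3) * α - Real.pi / 3) := by
      rw [hc1def, hc2def,
        show (2/3) * (Real.pi - α) = Real.pi - (Real.pi / 3 + (2/3) * α) by ring,
        Real.cos_pi_sub, Real.cos_add, Real.cos_sub, Real.cos_pi_div_three,
        Real.sin_pi_div_three]
      ring
    have hsum_gt : 1 / 2 < c1 + c2 := by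
      rw [hsum, show (2/3) * α - Real.pi / 3 = -(Real.pi / 3 - (2/3) * α) by ring,
        Real.cos_neg]
      have := Real.cos_lt_cos_of_nonneg_of_le_pi
        (by linarith : (0:ℝ) ≤ Real.pi / 3 - (2/3) * α)
        (by linarith [Real.pi_pos] : Real.pi / 3 ≤ Real.pi)
        (by linarith : Real.pi / 3 - (2/3) * α < Real.pi / 3)
      rwa [Real.cos_pi_div_three] at this
    have h12 : 5 * M < r1 + r2 := by
      have hmul := mul_pos hM (by linarith : (0:ℝ) < c1 + c2 - 1 / 2)
      rw [hr1', hr2]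
      linarith only [hmul]
    refine ⟨r1 + r2 - 6 * M, 0, 0, 0, ?_, ?_⟩
    · intro r
      linear_combination (-(r^4)) * hG + (-(r^3)) * hprod
    · intro r hr
      rw [hrp] at hr
      have hr0 : 0 < r := by linarith
      have hrp0 : 0 < r + (r1 + r2 - 6 * M) := by linarith
      have hmul := mul_pos (pow_pos hr0 3) hrp0
      linarith only [hmul]
end

section
/- For ℰ = 0 geodesics (E = 0, L_z ≠ 0) with 𝒬 = cos²θ_max/sin²θ_max, the radial function satisfies sin²θ_max · R(r, 0, 1, 𝒬) = −r² + 2Mr − a²cos²θ_max, whose unique root in the exterior region r > M is r_turn = M + √(M² − a²cos²θ_max), coinciding with the ergosphere radius r_ergo(θ_max). -/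
/-! With `𝒬 = cos²θ/sin²θ` and `ℰ = 0`, multiplying `R` by `sin²θ` clears the denominator, and
`sin²θ + cos²θ = 1` turns `sin²θ · R` into `-(r - M)² + M² - a²cos²θ`. On `r > M` the root of this
quadratic is read off by taking the positive square root of `(r - M)² = M² - a²cos²θ`. -/

theorem sin_sq_mul_zero_energy_radial_eq {s c : ℝ} (hs : s ≠ 0) (hsc : s ^ 2 + c ^ 2 = 1)
    (M a r : ℝ) :
    s ^ 2 * (((r ^ 2 + a ^ 2) * 0 - a) ^ 2 -
      (r ^ 2 - 2 * M * r + a ^ 2) * (c ^ 2 / s ^ 2 + (a * 0 - 1) ^ 2)) =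
      -r ^ 2 + 2 * M * r - a ^ 2 * c ^ 2 := by
  field_simp
  linear_combination (-(r * (r - 2 * M))) * hsc

theorem sub_sq_eq_iff_eq_add_sqrt {M r : ℝ} (hr : M < r) (D : ℝ) :
    (r - M) ^ 2 = D ↔ r = M + √D := by
  rw [eq_comm (a := r), ← eq_sub_iff_add_eq', Real.sqrt_eq_iff_mul_self_eq_of_pos (sub_pos.2 hr),
    sq]

theorem zero_energy_turning_point_general (M a : ℝ)
    (θmax : ℝ) (hθ : θmax ∈ Set.Ioo 0 Real.pi)
    (Q : ℝ) (hQdef : Q = Real.cos θmax ^ 2 / Real.sin θmax ^ 2)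
    (R : ℝ → ℝ)
    (hR : ∀ r, R r = ((r ^ 2 + a ^ 2) * 0 - a) ^ 2 -
      (r ^ 2 - 2 * M * r + a ^ 2) * (Q + (a * 0 - 1) ^ 2)) :
    (∀ r : ℝ, Real.sin θmax ^ 2 * R r =
      -r ^ 2 + 2 * M * r - a ^ 2 * Real.cos θmax ^ 2) ∧
    (∀ r : ℝ, M < r →
      (R r = 0 ↔ r = M + Real.sqrt (M ^ 2 - a ^ 2 * Real.cos θmax ^ 2))) := by
  have hsin : Real.sin θmax ≠ 0 := (Real.sin_pos_of_pos_of_lt_pi hθ.1 hθ.2).ne'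
  have hsinR : ∀ r : ℝ, Real.sin θmax ^ 2 * R r =
      -r ^ 2 + 2 * M * r - a ^ 2 * Real.cos θmax ^ 2 := fun r => by
    rw [hR, hQdef]
    exact sin_sq_mul_zero_energy_radial_eq hsin (Real.sin_sq_add_cos_sq θmax) M a r
  refine ⟨hsinR, fun r hr => ?_⟩
  calc R r = 0 ↔ Real.sin θmax ^ 2 * R r = 0 := (mul_eq_zero_iff_left (pow_ne_zero 2 hsin)).symm
    _ ↔ (r - M) ^ 2 = M ^ 2 - a ^ 2 * Real.cos θmax ^ 2 := by
      rw [hsinR]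
      constructor <;> intro h <;> linarith
    _ ↔ _ := sub_sq_eq_iff_eq_add_sqrt hr _

/-- For `ℰ = 0` null geodesics with `𝒬 = cos²θ_max/sin²θ_max`:
`sin²θ_max · R(r, 0, 1, 𝒬) = −r² + 2Mr − a²cos²θ_max`, and its unique root
with `r > M` is `r_turn = M + √(M² − a²cos²θ_max)`, the ergosphere radius. -/
theorem zero_energy_turning_point (M a : ℝ) (hM : 0 < M)
    (ha0 : 0 ≤ a) (haM : a < M)
    (θmax : ℝ) (hθ : θmax ∈ Set.Ioo 0 Real.pi)
    (Q : ℝ) (hQdef : Q = Real.cos θmax ^ 2 / Real.sin θmax ^ 2)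
    (R : ℝ → ℝ)
    (hR : ∀ r, R r = ((r ^ 2 + a ^ 2) * 0 - a) ^ 2 -
      (r ^ 2 - 2 * M * r + a ^ 2) * (Q + (a * 0 - 1) ^ 2)) :
    (∀ r : ℝ, Real.sin θmax ^ 2 * R r =
      -r ^ 2 + 2 * M * r - a ^ 2 * Real.cos θmax ^ 2) ∧
    (∀ r : ℝ, M < r →
      (R r = 0 ↔ r = M + Real.sqrt (M ^ 2 - a ^ 2 * Real.cos θmax ^ 2))) :=
  zero_energy_turning_point_general M a θmax hθ Q hQdef R hR
end

section
/- Define h(x) = 4x√(Δ(r_p)Δ(x)) / (Δ'(x)(r_p² − x²) + 4xΔ(x)) for x, r_p > r₊. Then its denominator D(x, r_p) = 4xΔ(x) + (r_p² − x²)Δ'(x) is strictly positive for all x, r_p > r₊; moreover h'(x) has the sign of (r_p − x): h is strictly increasing for x < r_p and strictly decreasing for x > r_p, with h(r_p) = 1. -/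
/-!
With `D` the denominator of `h`, the quotient rule and the identity
`(2Δ + xΔ') D − 2xΔ D' = 4 (r_p² − x²) ((x − M)³ + M (M² − a²))`
show that `h'` is `r_p² − x²` times a positive factor: the cubic is positive for `x > M`
because `a² ≤ M²`. Positivity of `D` itself follows from writing it, with `s = √(M² − a²)`, as
`2 (x − M)(r_p² − r₊²) + 2 (x − r₊)((x − r₊)² + 3 s (x − r₊) + 2 r₊ s)`.
Monotonicity on either side of `r_p` is then the mean value theorem.
-/

open Real Set

theorem HasDerivAt.mul_sqrt_div {u D : ℝ → ℝ} {u' D' x : ℝ} (hu : HasDerivAt u u' x)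
    (hD : HasDerivAt D D' x) (hu0 : 0 < u x) (hD0 : D x ≠ 0) :
    HasDerivAt (fun y => y * √(u y) / D y)
      (((2 * u x + x * u') * D x - 2 * x * u x * D') / (2 * √(u x) * D x ^ 2)) x := by
  refine (((hasDerivAt_id x).mul (hu.sqrt hu0.ne')).div hD hD0).congr_deriv ?_
  have hs : 0 < √(u x) := sqrt_pos.2 hu0
  simp only [Pi.mul_apply, id]
  field_simp
  rw [sq_sqrt hu0.le]
  ring

namespace Kerr

def delta (M a x : ℝ) : ℝ := x ^ 2 - 2 * M * x + a ^ 2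

noncomputable def outerHorizon (M a : ℝ) : ℝ := M + √(M ^ 2 - a ^ 2)

def hDenom (M a rp x : ℝ) : ℝ := (2 * x - 2 * M) * (rp ^ 2 - x ^ 2) + 4 * x * delta M a x

noncomputable def hFun (M a rp x : ℝ) : ℝ :=
  4 * x * √(delta M a rp * delta M a x) / hDenom M a rp x

variable {M a rp x : ℝ}

theorem outerHorizon_nonneg (hM : 0 ≤ M) : 0 ≤ outerHorizon M a :=
  add_nonneg hM (sqrt_nonneg _)

theorem lt_of_outerHorizon_lt (hx : outerHorizon M a < x) : M < x := by
  unfold outerHorizon at hx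
  linarith [sqrt_nonneg (M ^ 2 - a ^ 2)]

theorem delta_pos (hx : outerHorizon M a < x) : 0 < delta M a x := by
  have hxM : 0 < x - M := sub_pos.2 (lt_of_outerHorizon_lt hx)
  have hlt : M ^ 2 - a ^ 2 < (x - M) ^ 2 :=
    (sqrt_lt' hxM).1 (by unfold outerHorizon at hx; linarith)
  have : delta M a x = (x - M) ^ 2 - (M ^ 2 - a ^ 2) := by unfold delta; ring
  linarith

theorem hDenom_eq (ha : a ^ 2 ≤ M ^ 2) :
    hDenom M a rp x = 2 * (x - M) * (rp ^ 2 - outerHorizon M a ^ 2) +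
      2 * (x - outerHorizon M a) * ((x - outerHorizon M a) ^ 2 +
        3 * √(M ^ 2 - a ^ 2) * (x - outerHorizon M a) +
        2 * outerHorizon M a * √(M ^ 2 - a ^ 2)) := by
  have hs : √(M ^ 2 - a ^ 2) ^ 2 = M ^ 2 - a ^ 2 := sq_sqrt (by linarith)
  unfold hDenom delta outerHorizon
  linear_combination 4 * x * hs

theorem hDenom_pos (hM : 0 ≤ M) (ha : a ^ 2 ≤ M ^ 2) (hx : outerHorizon M a < x)
    (hrp : outerHorizon M a < rp) : 0 < hDenom M a rp x := by
  have := outerHorizon_nonneg (a := a) hM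
  have := lt_of_outerHorizon_lt hx
  have := sqrt_nonneg (M ^ 2 - a ^ 2)
  have : 0 ≤ rp ^ 2 - outerHorizon M a ^ 2 := by nlinarith
  have : 0 < x - outerHorizon M a := by linarith
  rw [hDenom_eq ha]
  positivity

theorem hFun_self (hrp : 0 < rp) (hΔ : 0 < delta M a rp) : hFun M a rp rp = 1 := by
  unfold hFun hDenom
  rw [sqrt_mul_self hΔ.le]
  field_simp
  ring

theorem hasDerivAt_delta : HasDerivAt (delta M a) (2 * x - 2 * M) x := by
  refine (((hasDerivAt_pow 2 x).sub ((hasDerivAt_id x).const_mul (2 * M))).add_const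
    (a ^ 2)).congr_deriv ?_
  ring

theorem hasDerivAt_hDenom :
    HasDerivAt (hDenom M a rp) (2 * (3 * x ^ 2 - 6 * M * x + 2 * a ^ 2 + rp ^ 2)) x := by
  have h2 : HasDerivAt (fun y : ℝ => 2 * y - 2 * M) 2 x := by
    simpa using ((hasDerivAt_id x).const_mul (2 : ℝ)).sub_const (2 * M)
  have h4 : HasDerivAt (fun y : ℝ => 4 * y) 4 x := by
    simpa using (hasDerivAt_id x).const_mul (4 : ℝ)
  refine ((h2.mul ((hasDerivAt_pow 2 x).const_sub (rp ^ 2))).add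
    (h4.mul hasDerivAt_delta)).congr_deriv ?_
  unfold delta
  ring

theorem hasDerivAt_hFun (hΔrp : 0 < delta M a rp) (hΔx : 0 < delta M a x)
    (hD : hDenom M a rp x ≠ 0) :
    HasDerivAt (hFun M a rp) ((rp ^ 2 - x ^ 2) * (8 * delta M a rp *
      ((x - M) ^ 3 + M * (M ^ 2 - a ^ 2)) /
      (√(delta M a rp * delta M a x) * hDenom M a rp x ^ 2))) x := by
  have hquot := ((hasDerivAt_delta.const_mul (delta M a rp)).mul_sqrt_div hasDerivAt_hDenom
    (mul_pos hΔrp hΔx) hD).const_mul 4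
  have hfun : hFun M a rp = fun y => 4 * (y * √(delta M a rp * delta M a y) / hDenom M a rp y) := by
    funext y
    unfold hFun
    ring
  rw [hfun]
  refine hquot.congr_deriv ?_
  have hs : 0 < √(delta M a rp * delta M a x) := sqrt_pos.2 (mul_pos hΔrp hΔx)
  field_simp
  unfold hDenom delta
  ring

theorem cube_sub_add_mul_pos (hM : 0 ≤ M) (ha : a ^ 2 ≤ M ^ 2) (hx : M < x) :
    0 < (x - M) ^ 3 + M * (M ^ 2 - a ^ 2) := by
  have := pow_pos (sub_pos.2 hx) 3
  have := mul_nonneg hM (sub_nonneg.2 ha)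
  linarith

theorem exists_hasDerivAt_hFun (hM : 0 ≤ M) (ha : a ^ 2 ≤ M ^ 2) (hx : outerHorizon M a < x)
    (hrp : outerHorizon M a < rp) :
    ∃ K, 0 < K ∧ HasDerivAt (hFun M a rp) ((rp ^ 2 - x ^ 2) * K) x := by
  have hΔrp := delta_pos hrp
  have hΔx := delta_pos hx
  refine ⟨_, ?_, hasDerivAt_hFun hΔrp hΔx (hDenom_pos hM ha hx hrp).ne'⟩
  have := hDenom_pos hM ha hx hrp
  have := cube_sub_add_mul_pos hM ha (lt_of_outerHorizon_lt hx)
  have := sqrt_pos.2 (mul_pos hΔrp hΔx)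
  positivity

theorem continuousAt_hFun (hM : 0 ≤ M) (ha : a ^ 2 ≤ M ^ 2) (hx : outerHorizon M a < x)
    (hrp : outerHorizon M a < rp) : ContinuousAt (hFun M a rp) x :=
  (exists_hasDerivAt_hFun hM ha hx hrp).choose_spec.2.continuousAt

theorem deriv_hFun_pos_iff (hM : 0 ≤ M) (ha : a ^ 2 ≤ M ^ 2) (hx : outerHorizon M a < x)
    (hrp : outerHorizon M a < rp) : 0 < deriv (hFun M a rp) x ↔ x < rp := by
  obtain ⟨K, hK, hd⟩ := exists_hasDerivAt_hFun hM ha hx hrp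
  have := outerHorizon_nonneg (a := a) hM
  rw [hd.deriv, mul_pos_iff_of_pos_right hK, sub_pos, sq_lt_sq₀ (by linarith) (by linarith)]

theorem deriv_hFun_neg (hM : 0 ≤ M) (ha : a ^ 2 ≤ M ^ 2) (hrp : outerHorizon M a < rp)
    (hx : rp < x) : deriv (hFun M a rp) x < 0 := by
  obtain ⟨K, hK, hd⟩ := exists_hasDerivAt_hFun hM ha (hrp.trans hx) hrp
  have := outerHorizon_nonneg (a := a) hM
  rw [hd.deriv]
  exact mul_neg_of_neg_of_pos (sub_neg.2 ((sq_lt_sq₀ (by linarith) (by linarith)).2 hx)) hK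

theorem strictMonoOn_hFun (hM : 0 ≤ M) (ha : a ^ 2 ≤ M ^ 2) :
    StrictMonoOn (hFun M a rp) (Ioc (outerHorizon M a) rp) := by
  refine strictMonoOn_of_deriv_pos (convex_Ioc _ _) (fun x hx =>
    (continuousAt_hFun hM ha hx.1 (hx.1.trans_le hx.2)).continuousWithinAt) fun x hx => ?_
  rw [interior_Ioc] at hx
  exact (deriv_hFun_pos_iff hM ha hx.1 (hx.1.trans hx.2)).2 hx.2

theorem strictAntiOn_hFun (hM : 0 ≤ M) (ha : a ^ 2 ≤ M ^ 2) (hrp : outerHorizon M a < rp) :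
    StrictAntiOn (hFun M a rp) (Ici rp) := by
  refine strictAntiOn_of_deriv_neg (convex_Ici _)
    (fun x hx => (continuousAt_hFun hM ha (hrp.trans_le hx) hrp).continuousWithinAt)
    fun x hx => ?_
  rw [interior_Ici] at hx
  exact deriv_hFun_neg hM ha hrp hx

end Kerr

/-- Properties of `h(x) = 4x√(Δ(r_p)Δ(x)) / (Δ'(x)(r_p² − x²) + 4xΔ(x))`:
its denominator `D(x) = 4xΔ(x) + (r_p² − x²)Δ'(x)` is strictly positive for
`x, r_p > r₊`; `h(r_p) = 1`; the derivative of `h` has the sign of `r_p − x`,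
so `h` is strictly increasing on `(r₊, r_p]` and strictly decreasing on
`[r_p, ∞)`. -/
theorem h_function_properties (M a : ℝ) (hM : 0 < M)
    (ha0 : 0 ≤ a) (haM : a < M)
    (Δ : ℝ → ℝ) (hΔ : ∀ x, Δ x = x ^ 2 - 2 * M * x + a ^ 2)
    (rplus : ℝ) (hrplus : rplus = M + Real.sqrt (M ^ 2 - a ^ 2))
    (rp : ℝ) (hrp : rplus < rp)
    (h : ℝ → ℝ)
    (hh : ∀ x, h x = 4 * x * Real.sqrt (Δ rp * Δ x) /
      ((2 * x - 2 * M) * (rp ^ 2 - x ^ 2) + 4 * x * Δ x)) :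
    (∀ x : ℝ, rplus < x →
      0 < 4 * x * Δ x + (rp ^ 2 - x ^ 2) * (2 * x - 2 * M)) ∧
    h rp = 1 ∧
    (∀ x : ℝ, rplus < x → x ≠ rp → (0 < deriv h x ↔ x < rp)) ∧
    StrictMonoOn h (Set.Ioc rplus rp) ∧
    StrictAntiOn h (Set.Ici rp) := by
  obtain rfl : Δ = Kerr.delta M a := funext hΔ
  obtain rfl : h = Kerr.hFun M a rp := funext hh
  obtain rfl : rplus = Kerr.outerHorizon M a := hrplus
  have ha : a ^ 2 ≤ M ^ 2 := by nlinarith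
  refine ⟨fun x hx => ?_, Kerr.hFun_self ?_ (Kerr.delta_pos hrp),
    fun x hx _ => Kerr.deriv_hFun_pos_iff hM.le ha hx hrp, Kerr.strictMonoOn_hFun hM.le ha,
    Kerr.strictAntiOn_hFun hM.le ha hrp⟩
  · have := Kerr.hDenom_pos hM.le ha hx hrp
    unfold Kerr.hDenom at this
    linarith
  · linarith [Kerr.outerHorizon_nonneg (a := a) hM.le]
end

section
/- Let f : [−1,1] → ℝ be smooth (C²) with f(±1) = 0, f(0) = 1, f'(0) = 0, f''(0) < 0, 0 ≤ f(x) < 1 for x ≠ 0, f' > 0 on [−1,0) and f' < 0 on (0,1]. Then the function g defined by g(x) = arcsin(f(x)) for x ∈ [−1,0), g(0) = π/2, g(x) = π − arcsin(f(x)) for x ∈ (0,1], is differentiable at 0 with g'(0) = √(−f''(0)). -/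
/-!
Near `0`, `g` is `π/2 ∓ arcsin ∘ f`, so its slope at `0` is `arccos (f x) / |x|` from both sides.
As `y → 1⁻`, `arccos y ~ sin (arccos y) = √(1 - y²)`, and by l'Hôpital's rule
`(1 - f x ^ 2) / x ^ 2 → -f''(0)`, whence the slope tends to `√(-f''(0))`.
-/

open Real Filter Set Topology

theorem tendsto_sub_div_sq_of_deriv_eq_zero {f : ℝ → ℝ} {a c : ℝ}
    (hf : ∀ᶠ x in 𝓝 a, DifferentiableAt ℝ f x) (hf' : deriv f a = 0)
    (hf'' : HasDerivAt (deriv f) c a) :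
    Tendsto (fun x => (f x - f a) / (x - a) ^ 2) (𝓝[≠] a) (𝓝 (c / 2)) := by
  have hslope : Tendsto (fun x => deriv f x / (x - a)) (𝓝[≠] a) (𝓝 c) := by
    refine (hasDerivAt_iff_tendsto_slope.mp hf'').congr fun x => ?_
    rw [slope_def_field, hf', sub_zero]
  refine HasDerivAt.lhopital_zero_nhdsNE (f' := deriv f) (g' := fun x => 2 * (x - a)) ?_ ?_ ?_
    ?_ ?_ ?_
  · filter_upwards [nhdsWithin_le_nhds hf] with x hx
    simpa using hx.hasDerivAt.sub_const (f a)
  · filter_upwards with x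
    simpa using ((hasDerivAt_id x).sub_const a).fun_pow 2
  · filter_upwards [self_mem_nhdsWithin] with x hx
    exact mul_ne_zero two_ne_zero (sub_ne_zero.mpr hx)
  · have := hf.self_of_nhds.continuousAt.sub_const (f a)
    rw [sub_self] at this
    exact this.mono_left nhdsWithin_le_nhds
  · exact (((continuous_sub_right a).pow 2).tendsto' a 0 (by simp)).mono_left nhdsWithin_le_nhds
  · refine (hslope.div_const 2).congr fun x => ?_
    rw [div_div, mul_comm]

theorem tendsto_arccos_div_sqrt_one_sub_sq :
    Tendsto (fun y => arccos y / √(1 - y ^ 2)) (𝓝[<] 1) (𝓝 1) := by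
  have hsinc : Tendsto (fun y => (sinc (arccos y))⁻¹) (𝓝 1) (𝓝 1) := by
    simpa [arccos_one, sinc_zero] using
      ((continuous_sinc.comp continuous_arccos).tendsto 1).inv₀ (by simp [arccos_one, sinc_zero])
  refine (hsinc.mono_left nhdsWithin_le_nhds).congr' ?_
  filter_upwards [self_mem_nhdsWithin] with y hy
  rw [sinc_of_ne_zero (arccos_pos.mpr hy).ne', sin_arccos, inv_div]

theorem slope_piecewise_arcsin {f g : ℝ → ℝ}
    (hg : ∀ x, g x = if x < 0 then arcsin (f x) else if x = 0 then π / 2 else π - arcsin (f x))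
    {x : ℝ} (hx : x ≠ 0) :
    slope g 0 x = arccos (f x) / |x| := by
  rw [slope_def_field, hg x, hg 0, if_neg (lt_irrefl 0), if_pos rfl, sub_zero, arccos]
  rcases hx.lt_or_gt with hneg | hpos
  · rw [if_pos hneg, abs_of_neg hneg, div_neg, ← neg_div, neg_sub]
  · rw [if_neg hpos.not_gt, if_neg hpos.ne', abs_of_pos hpos]
    ring_nf

theorem piecewise_arcsin_smooth_general (f : ℝ → ℝ) (hf : ContDiff ℝ 2 f)
    (h0 : f 0 = 1)
    (hd0 : deriv f 0 = 0)
    (hrange : ∀ x ∈ Set.Icc (-1 : ℝ) 1, x ≠ 0 → 0 ≤ f x ∧ f x < 1)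
    (g : ℝ → ℝ)
    (hg : ∀ x, g x = if x < 0 then Real.arcsin (f x)
      else if x = 0 then Real.pi / 2 else Real.pi - Real.arcsin (f x)) :
    HasDerivAt g (Real.sqrt (-(deriv (deriv f) 0))) 0 := by
  have hfd : Differentiable ℝ f := hf.differentiable two_ne_zero
  have hcont : Tendsto f (𝓝[≠] 0) (𝓝 1) :=
    h0 ▸ (hfd 0).continuousAt.tendsto.mono_left nhdsWithin_le_nhds
  have htaylor : Tendsto (fun x => (1 - f x ^ 2) / x ^ 2) (𝓝[≠] 0)
      (𝓝 (-deriv (deriv f) 0)) := by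
    have hquot := tendsto_sub_div_sq_of_deriv_eq_zero (.of_forall hfd) hd0
      (hf.differentiable_deriv_two 0).hasDerivAt
    convert hquot.neg.mul (hcont.const_add 1) using 2 with x
    · rw [h0, sub_zero]
      ring
    · ring
  have hnear : ∀ᶠ x in 𝓝[≠] (0 : ℝ), 0 ≤ f x ∧ f x < 1 := by
    filter_upwards [nhdsWithin_le_nhds (Ioo_mem_nhds neg_one_lt_zero one_pos),
      self_mem_nhdsWithin] with x hx hx0
    exact hrange x (Ioo_subset_Icc_self hx) hx0
  have hf_lt : Tendsto f (𝓝[≠] 0) (𝓝[<] 1) :=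
    tendsto_nhdsWithin_iff.mpr ⟨hcont, hnear.mono fun _ hx => hx.2⟩
  have hlim := (tendsto_arccos_div_sqrt_one_sub_sq.comp hf_lt).mul
    ((continuous_sqrt.tendsto _).comp htaylor)
  rw [one_mul] at hlim
  rw [hasDerivAt_iff_tendsto_slope]
  refine hlim.congr' ?_
  filter_upwards [hnear, self_mem_nhdsWithin] with x ⟨hf0, hf1⟩ hx
  have hsqrt : √(1 - f x ^ 2) ≠ 0 := (sqrt_pos.mpr (by nlinarith)).ne'
  rw [Function.comp_apply, Function.comp_apply, sqrt_div' _ (sq_nonneg x), sqrt_sq_eq_abs,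
    div_mul_div_cancel₀ hsqrt, slope_piecewise_arcsin hg hx]

/-- Appendix lemma: if `f` is `C²` with `f(±1) = 0`, `f(0) = 1`, `f'(0) = 0`,
`f''(0) < 0`, `0 ≤ f < 1` away from `0`, `f' > 0` on `[−1,0)` and `f' < 0` on
`(0,1]`, then the piecewise function `g` (equal to `arcsin ∘ f` on `[−1,0)`,
to `π/2` at `0`, and to `π − arcsin ∘ f` on `(0,1]`) is differentiable at `0`
with `g'(0) = √(−f''(0))`. -/
theorem piecewise_arcsin_smooth (f : ℝ → ℝ) (hf : ContDiff ℝ 2 f)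
    (hm1 : f (-1) = 0) (h1 : f 1 = 0) (h0 : f 0 = 1)
    (hd0 : deriv f 0 = 0) (hdd0 : deriv (deriv f) 0 < 0)
    (hrange : ∀ x ∈ Set.Icc (-1 : ℝ) 1, x ≠ 0 → 0 ≤ f x ∧ f x < 1)
    (hpos : ∀ x ∈ Set.Ico (-1 : ℝ) 0, 0 < deriv f x)
    (hneg : ∀ x ∈ Set.Ioc (0 : ℝ) 1, deriv f x < 0)
    (g : ℝ → ℝ)
    (hg : ∀ x, g x = if x < 0 then Real.arcsin (f x)
      else if x = 0 then Real.pi / 2 else Real.pi - Real.arcsin (f x)) :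
    HasDerivAt g (Real.sqrt (-(deriv (deriv f) 0))) 0 :=
  piecewise_arcsin_smooth_general f hf h0 hd0 hrange g hg
end
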